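/- arXiv:2504.17061 — 7 statements merged into one kernel-verified Lean document; each statement's English description precedes it below -/
import Mathlib

section
/- Let ε ≥ 0, let X be a nonempty set, and let u₀, u₁, …, u_N : X → ℝ be functions (N ≥ 1). The following are equivalent: (i) there exist real numbers a₁, …, a_N and a bounded function e : X → ℝ with ω(e) ≤ ε such that u₀(x) = Σ_{i=1}^N a_i u_i(x) + e(x) for all x ∈ X; (ii) there exists a utilitarian aggregator w ∈ W with ‖u₀ − w‖∞ ≤ ε/2. Moreover, the equivalence continues to hold when in (i) one additionally requires a_i ≥ 0 for all i (respectively a_i > 0 for all i) and in (ii) the set W is replaced by W₊ (respectively W₊₊). -/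
/-! The error term in (i) is forced to be `u₀ - ∑ aᵢ uᵢ`, and a bounded real function has
oscillation at most `ε` exactly when it stays within `ε / 2` of a constant, namely the
midpoint of its infimum and supremum. -/

open Set

lemma bddOscillation_le_iff_exists_abs_sub_le_half {X : Type*} [Nonempty X] (e : X → ℝ)
    (ε : ℝ) :
    (BddAbove (range e) ∧ BddBelow (range e) ∧ sSup (range e) - sInf (range e) ≤ ε) ↔
      ∃ c : ℝ, ∀ x, |e x - c| ≤ ε / 2 := by
  constructor
  · rintro ⟨hA, hB, hosc⟩
    refine ⟨(sSup (range e) + sInf (range e)) / 2, fun x => abs_le.2 ⟨?_, ?_⟩⟩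
    · linarith [csInf_le hB (mem_range_self x)]
    · linarith [le_csSup hA (mem_range_self x)]
  · rintro ⟨c, hc⟩
    have hupper : ∀ y ∈ range e, y ≤ c + ε / 2 := by
      rintro _ ⟨x, rfl⟩
      linarith [(abs_le.1 (hc x)).2]
    have hlower : ∀ y ∈ range e, c - ε / 2 ≤ y := by
      rintro _ ⟨x, rfl⟩
      linarith [(abs_le.1 (hc x)).1]
    refine ⟨⟨_, hupper⟩, ⟨_, hlower⟩, ?_⟩
    linarith [csSup_le (range_nonempty e) hupper, le_csInf (range_nonempty e) hlower]

lemma exists_add_bddOscillation_le_iff {X : Type*} [Nonempty X] (ε : ℝ) (u₀ f : X → ℝ) :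
    (∃ e : X → ℝ, BddAbove (range e) ∧ BddBelow (range e) ∧
        sSup (range e) - sInf (range e) ≤ ε ∧ ∀ x, u₀ x = f x + e x) ↔
      ∃ b : ℝ, ∀ x, |u₀ x - (f x + b)| ≤ ε / 2 := by
  have hsub : ∀ b x, u₀ x - (f x + b) = (u₀ - f) x - b := fun b x => by
    simp only [Pi.sub_apply]; ring
  simp only [hsub]
  constructor
  · rintro ⟨e, hA, hB, hosc, hu₀⟩
    obtain rfl : e = u₀ - f := funext fun x => by simp only [Pi.sub_apply, hu₀ x]; ring
    exact (bddOscillation_le_iff_exists_abs_sub_le_half _ ε).1 ⟨hA, hB, hosc⟩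
  · intro h
    obtain ⟨hA, hB, hosc⟩ := (bddOscillation_le_iff_exists_abs_sub_le_half _ ε).2 h
    exact ⟨u₀ - f, hA, hB, hosc, fun x => by simp only [Pi.sub_apply]; ring⟩

theorem stmt0_general {X : Type*} [Nonempty X] {N : ℕ} {ε : ℝ}
    (u₀ : X → ℝ) (u : Fin N → X → ℝ) :
    (((∃ (a : Fin N → ℝ) (e : X → ℝ), BddAbove (Set.range e) ∧ BddBelow (Set.range e) ∧
          sSup (Set.range e) - sInf (Set.range e) ≤ ε ∧
          ∀ x, u₀ x = (∑ i, a i * u i x) + e x) ↔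
        (∃ (a : Fin N → ℝ) (b : ℝ),
          ∀ x, |u₀ x - ((∑ i, a i * u i x) + b)| ≤ ε / 2)) ∧
      ((∃ (a : Fin N → ℝ) (e : X → ℝ), (∀ i, 0 ≤ a i) ∧
          BddAbove (Set.range e) ∧ BddBelow (Set.range e) ∧
          sSup (Set.range e) - sInf (Set.range e) ≤ ε ∧
          ∀ x, u₀ x = (∑ i, a i * u i x) + e x) ↔
        (∃ (a : Fin N → ℝ) (b : ℝ), (∀ i, 0 ≤ a i) ∧
          ∀ x, |u₀ x - ((∑ i, a i * u i x) + b)| ≤ ε / 2)) ∧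
      ((∃ (a : Fin N → ℝ) (e : X → ℝ), (∀ i, 0 < a i) ∧
          BddAbove (Set.range e) ∧ BddBelow (Set.range e) ∧
          sSup (Set.range e) - sInf (Set.range e) ≤ ε ∧
          ∀ x, u₀ x = (∑ i, a i * u i x) + e x) ↔
        (∃ (a : Fin N → ℝ) (b : ℝ), (∀ i, 0 < a i) ∧
          ∀ x, |u₀ x - ((∑ i, a i * u i x) + b)| ≤ ε / 2))) := by
  have key := fun a : Fin N → ℝ =>
    exists_add_bddOscillation_le_iff ε u₀ (fun x => ∑ i, a i * u i x)
  simp only [exists_and_left]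
  exact ⟨exists_congr key, exists_congr fun a => and_congr_right fun _ => key a,
    exists_congr fun a => and_congr_right fun _ => key a⟩

/-- Proposition: equivalent forms of approximate utilitarian aggregation.
Let `ε ≥ 0`, `X` nonempty, `u₀, u₁, …, u_N : X → ℝ` with `N ≥ 1`.  The following are
equivalent: (i) there exist reals `a₁,…,a_N` and a bounded function `e : X → ℝ` with
oscillation `ω(e) ≤ ε` such that `u₀ = Σ aᵢ uᵢ + e`; (ii) there is a utilitarian
aggregator `w = Σ aᵢ uᵢ + b` with `‖u₀ − w‖∞ ≤ ε/2`.  The equivalence also holds when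
one requires `aᵢ ≥ 0` for all `i` (resp. `aᵢ > 0` for all `i`). -/
theorem stmt0 {X : Type*} [Nonempty X] {N : ℕ} (hN : 1 ≤ N) {ε : ℝ} (hε : 0 ≤ ε)
    (u₀ : X → ℝ) (u : Fin N → X → ℝ) :
    (((∃ (a : Fin N → ℝ) (e : X → ℝ), BddAbove (Set.range e) ∧ BddBelow (Set.range e) ∧
          sSup (Set.range e) - sInf (Set.range e) ≤ ε ∧
          ∀ x, u₀ x = (∑ i, a i * u i x) + e x) ↔
        (∃ (a : Fin N → ℝ) (b : ℝ),
          ∀ x, |u₀ x - ((∑ i, a i * u i x) + b)| ≤ ε / 2)) ∧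
      ((∃ (a : Fin N → ℝ) (e : X → ℝ), (∀ i, 0 ≤ a i) ∧
          BddAbove (Set.range e) ∧ BddBelow (Set.range e) ∧
          sSup (Set.range e) - sInf (Set.range e) ≤ ε ∧
          ∀ x, u₀ x = (∑ i, a i * u i x) + e x) ↔
        (∃ (a : Fin N → ℝ) (b : ℝ), (∀ i, 0 ≤ a i) ∧
          ∀ x, |u₀ x - ((∑ i, a i * u i x) + b)| ≤ ε / 2)) ∧
      ((∃ (a : Fin N → ℝ) (e : X → ℝ), (∀ i, 0 < a i) ∧
          BddAbove (Set.range e) ∧ BddBelow (Set.range e) ∧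
          sSup (Set.range e) - sInf (Set.range e) ≤ ε ∧
          ∀ x, u₀ x = (∑ i, a i * u i x) + e x) ↔
        (∃ (a : Fin N → ℝ) (b : ℝ), (∀ i, 0 < a i) ∧
          ∀ x, |u₀ x - ((∑ i, a i * u i x) + b)| ≤ ε / 2))) :=
  stmt0_general u₀ u
end

section
/- Let (X, u₀, {u₁,…,u_N}) be a setting with vN-M utilities in which X is additionally a compact subset of a real topological vector space and u₀, u₁, …, u_N are continuous. Define η : X × X × ℝ₊^N → ℝ by η(x, y, a) = u₀(y) − u₀(x) + Σ_{i=1}^N a_i (u_i(x) − u_i(y)). Then η has the minimax property: max_{(x,y)∈X×X} inf_{a∈ℝ₊^N} η(x, y, a) = min_{a∈ℝ₊^N} max_{(x,y)∈X×X} η(x, y, a), where in particular the outer maximum on the left-hand side and the outer minimum on the right-hand side are attained. -/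
/-!
With `g (x, y) = ((uᵢ x - uᵢ y)ᵢ, u₀ y - u₀ x)`, `η (x, y, a)` is the Lagrangian `t + a ⬝ᵥ w` at
`(w, t) = g (x, y)` of the problem "maximise `t` over `(w, t) ∈ V := g (X × X)` subject to
`w ≥ 0`", and a saddle point of that Lagrangian gives all four claims. The set `V` is compact,
convex, and symmetric because swapping `x` and `y` negates `g`; a maximiser of the problem exists
by compactness, and the point is to find a Lagrange multiplier `a ≥ 0`. Separation gives Fritz John
multipliers `(β, β₀)`. If `β₀ > 0`, then `β / β₀` is a Lagrange multiplier. If `β₀ = 0`, symmetry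
forces `β ⬝ᵥ w = 0` on all of `V`. That makes one constraint redundant once the rest of the support
of `β` is imposed as equalities, so induction on the number of constraints applies.
-/

def eta {E : Type*} {N : ℕ} (u₀ : E → ℝ) (u : Fin N → E → ℝ)
    (x y : E) (a : Fin N → ℝ) : ℝ :=
  u₀ y - u₀ x + ∑ i, a i * (u i x - u i y)

open Filter Topology Finset

section LagrangeMultipliers

variable {ι : Type*}

def constraintSet (E I : Finset ι) : Set (ι → ℝ) :=
  {w | (∀ i ∈ E, w i = 0) ∧ ∀ i ∈ I, 0 ≤ w i}

variable {E I : Finset ι}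

lemma convex_constraintSet : Convex ℝ (constraintSet E I) := by
  rintro w ⟨hwE, hwI⟩ w' ⟨hw'E, hw'I⟩ α β hα hβ -
  refine ⟨fun i hi => by simp [hwE i hi, hw'E i hi], fun i hi => ?_⟩
  have := hwI i hi
  have := hw'I i hi
  simp only [Pi.add_apply, Pi.smul_apply, smul_eq_mul]
  positivity

lemma isClosed_constraintSet : IsClosed (constraintSet E I) := by
  simp only [constraintSet, Set.ofPred_and, Set.ofPred_forall]
  exact (isClosed_biInter fun i _ => isClosed_eq (continuous_apply i) continuous_const).inter
    (isClosed_biInter fun i _ => isClosed_le continuous_const (continuous_apply i))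

lemma smul_mem_constraintSet {w : ι → ℝ} (hw : w ∈ constraintSet E I) {τ : ℝ} (hτ : 0 ≤ τ) :
    τ • w ∈ constraintSet E I :=
  ⟨fun i hi => by simp [hw.1 i hi], fun i hi => mul_nonneg hτ (hw.2 i hi)⟩

lemma single_mem_constraintSet [DecidableEq ι] {i : ι} {s : ℝ} (hiE : i ∉ E)
    (hs : i ∈ I → 0 ≤ s) : Pi.single i s ∈ constraintSet E I := by
  refine ⟨fun k hk => ?_, fun k hk => ?_⟩
  · rw [Pi.single_eq_of_ne (ne_of_mem_of_not_mem hk hiE)]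
  · rcases eq_or_ne k i with rfl | hki
    · simpa using hs hk
    · simp [Pi.single_eq_of_ne hki]

lemma exists_forall_nonneg_add_mul (s : Finset ι) {a β : ι → ℝ} (hβ : ∀ i ∈ s, 0 ≤ β i)
    (h : ∀ i ∈ s, 0 < β i ∨ 0 ≤ a i) : ∃ t : ℝ, ∀ i ∈ s, 0 ≤ a i + t * β i := by
  refine ((eventually_all_finset s).2 fun i hi => ?_).exists (f := atTop)
  rcases h i hi with hβi | hai
  · exact (tendsto_atTop_add_const_left _ (a i)
      (tendsto_id.atTop_mul_const hβi)).eventually_ge_atTop 0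
  · exact (eventually_ge_atTop 0).mono fun t ht => add_nonneg hai (mul_nonneg ht (hβ i hi))

variable [Fintype ι]

lemma nonneg_of_forall_dotProduct_nonneg (hEI : Disjoint E I) {β : ι → ℝ}
    (hβ : ∀ w ∈ constraintSet E I, 0 ≤ β ⬝ᵥ w) {i : ι} (hi : i ∈ I) : 0 ≤ β i := by
  classical
  simpa using hβ _ (single_mem_constraintSet (disjoint_right.mp hEI hi) fun _ => zero_le_one)

lemma eq_zero_of_forall_dotProduct_nonneg {β : ι → ℝ}
    (hβ : ∀ w ∈ constraintSet E I, 0 ≤ β ⬝ᵥ w) {i : ι} (hiE : i ∉ E) (hiI : i ∉ I) :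
    β i = 0 := by
  classical
  have h₁ := hβ _ (single_mem_constraintSet (s := 1) hiE (absurd · hiI))
  have h₂ := hβ _ (single_mem_constraintSet (s := -1) hiE (absurd · hiI))
  simp only [dotProduct_single] at h₁ h₂
  linarith

lemma exists_dotProduct_add_mul (f : ((ι → ℝ) × ℝ) →L[ℝ] ℝ) :
    ∃ b : (ι → ℝ) × ℝ, ∀ v, f v = b.1 ⬝ᵥ v.1 + b.2 * v.2 := by
  classical
  refine ⟨((dotProductEquiv ℝ ι).symm (f.comp (.inl ℝ _ ℝ)), f (0, 1)), fun v => ?_⟩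
  have h : f (0, v.2) = v.2 * f (0, 1) := by rw [← smul_eq_mul, ← map_smul]; simp
  rw [← f.comp_inl_add_comp_inr, ← dotProductEquiv_apply_apply, LinearEquiv.apply_symm_apply]
  simp [h, mul_comm]

lemma nonneg_of_forall_lt_add_mul {L A B : ℝ} (h : ∀ τ : ℝ, 0 ≤ τ → L < A + τ * B) :
    0 ≤ B := by
  by_contra! hB
  have h₀ := h 0 le_rfl
  have h₁ := h ((A - L) / -B) (div_nonneg (by linarith) (by linarith))
  rw [div_mul_eq_mul_div, div_neg, mul_div_cancel_right₀ _ hB.ne] at h₁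
  linarith

/-- Convex Fritz John conditions for maximising `v.2` over `v ∈ V` subject to `v.1 ∈ C`, at
level `c`: `b.2` is the multiplier of the objective, and it may vanish. -/
def IsFritzJohn (C : Set (ι → ℝ)) (V : Set ((ι → ℝ) × ℝ)) (c : ℝ) (b : (ι → ℝ) × ℝ) : Prop :=
  0 ≤ b.2 ∧ (∀ w ∈ C, 0 ≤ b.1 ⬝ᵥ w) ∧ ∀ v ∈ V, b.1 ⬝ᵥ v.1 + b.2 * v.2 ≤ b.2 * c

variable {C : Set (ι → ℝ)} {V : Set ((ι → ℝ) × ℝ)} {c : ℝ}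

lemma IsFritzJohn.smul {b : (ι → ℝ) × ℝ} (h : IsFritzJohn C V c b) {r : ℝ} (hr : 0 ≤ r) :
    IsFritzJohn C V c (r • b) := by
  obtain ⟨h₀, hC, hV⟩ := h
  refine ⟨mul_nonneg hr h₀, fun w hw => ?_, fun v hv => ?_⟩
  · simpa [smul_dotProduct] using mul_nonneg hr (hC w hw)
  · have := mul_le_mul_of_nonneg_left (hV v hv) hr
    simp only [Prod.smul_fst, Prod.smul_snd, smul_dotProduct, smul_eq_mul]
    linarith

lemma isClosed_setOf_isFritzJohn :
    IsClosed {p : ((ι → ℝ) × ℝ) × ℝ | IsFritzJohn C V p.2 p.1} := by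
  simp only [IsFritzJohn, Set.ofPred_and, Set.ofPred_forall]
  exact (isClosed_le continuous_const (by fun_prop)).inter
    ((isClosed_biInter fun w _ => isClosed_le continuous_const (by fun_prop)).inter
      (isClosed_biInter fun v _ => isClosed_le (by fun_prop) (by fun_prop)))

lemma exists_multiplier_of_isFritzJohn (hEI : Disjoint E I) {b : (ι → ℝ) × ℝ}
    (hb : IsFritzJohn (constraintSet E I) V c b) (hb₂ : 0 < b.2) :
    ∃ a : ι → ℝ, (∀ i ∈ I, 0 ≤ a i) ∧ ∀ v ∈ V, v.2 + a ⬝ᵥ v.1 ≤ c := by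
  refine ⟨b.2⁻¹ • b.1, fun i hi => ?_, fun v hv => ?_⟩
  · exact mul_nonneg (inv_nonneg.2 hb₂.le) (nonneg_of_forall_dotProduct_nonneg hEI hb.2.1 hi)
  · have := hb.2.2 v hv
    have : b.2⁻¹ * (b.1 ⬝ᵥ v.1) ≤ c - v.2 := by
      rw [inv_mul_le_iff₀ hb₂]
      linarith
    rw [smul_dotProduct, smul_eq_mul]
    linarith

/-- On vectors orthogonal to `β`, the constraint `j` is redundant once the other constraints in
the support of `β` are turned into equalities. -/
lemma mem_constraintSet_of_dotProduct_eq_zero [DecidableEq ι] {β : ι → ℝ}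
    (hβ : ∀ w ∈ constraintSet E I, 0 ≤ β ⬝ᵥ w) {j : ι} (hj : β j ≠ 0) {w : ι → ℝ}
    (hw : β ⬝ᵥ w = 0)
    (hwC : w ∈ constraintSet ((E ∪ I.filter (β · ≠ 0)).erase j) (I.filter (β · = 0))) :
    w ∈ constraintSet E I := by
  obtain ⟨hwE', hwI'⟩ := hwC
  have hw₀ : ∀ k ≠ j, k ∈ E ∨ (k ∈ I ∧ β k ≠ 0) → w k = 0 := fun k hkj hk =>
    hwE' k (by simpa [hkj] using hk)
  -- every term of `β ⬝ᵥ w` but the `j`-th vanishes, so `w j = 0` as well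
  have hwj : w j = 0 := by
    have hterm : ∀ k ∈ univ, k ≠ j → β k * w k = 0 := fun k _ hkj => by
      by_cases hβk : β k = 0
      · simp [hβk]
      by_cases hkE : k ∈ E
      · simp [hw₀ k hkj (.inl hkE)]
      by_cases hkI : k ∈ I
      · simp [hw₀ k hkj (.inr ⟨hkI, hβk⟩)]
      exact absurd (eq_zero_of_forall_dotProduct_nonneg hβ hkE hkI) hβk
    rw [dotProduct, sum_eq_single j hterm (by simp)] at hw
    exact (mul_eq_zero.mp hw).resolve_left hj
  have hw₀' : ∀ k, k ∈ E ∨ (k ∈ I ∧ β k ≠ 0) → w k = 0 := fun k hk => by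
    rcases eq_or_ne k j with rfl | hkj
    exacts [hwj, hw₀ k hkj hk]
  refine ⟨fun i hi => hw₀' i (.inl hi), fun i hi => ?_⟩
  by_cases hβi : β i = 0
  · exact hwI' i (mem_filter.mpr ⟨hi, hβi⟩)
  · exact (hw₀' i (.inr ⟨hi, hβi⟩)).ge

lemma exists_constraints_of_dotProduct_eq_zero [DecidableEq ι] (hEI : Disjoint E I)
    {β : ι → ℝ} (hβ : ∀ w ∈ constraintSet E I, 0 ≤ β ⬝ᵥ w) (hβ₀ : β ≠ 0) :
    ∃ E' I' : Finset ι, Disjoint E' I' ∧ #E' + #I' < #E + #I ∧ (∀ i ∈ I, 0 < β i ∨ i ∈ I') ∧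
      ∀ w, β ⬝ᵥ w = 0 → w ∈ constraintSet E' I' → w ∈ constraintSet E I := by
  obtain ⟨j, hj⟩ : ∃ j, β j ≠ 0 := Function.ne_iff.mp hβ₀
  set S := I.filter (β · ≠ 0)
  have hjES : j ∈ E ∪ S := by
    by_cases hjE : j ∈ E
    · exact mem_union_left _ hjE
    by_cases hjI : j ∈ I
    · exact mem_union_right _ (mem_filter.mpr ⟨hjI, hj⟩)
    exact absurd (eq_zero_of_forall_dotProduct_nonneg hβ hjE hjI) hj
  refine ⟨(E ∪ S).erase j, I.filter (β · = 0), ?_, ?_, fun i hi => ?_,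
    fun w hw hwC => mem_constraintSet_of_dotProduct_eq_zero hβ hj hw hwC⟩
  · refine disjoint_left.mpr fun i hi hi' => ?_
    simp only [mem_erase, mem_union, mem_filter, S] at hi hi'
    rcases hi.2 with h | h
    · exact disjoint_left.mp hEI h hi'.1
    · exact h.2 hi'.2
  · have := card_union_le E S
    have := card_erase_of_mem hjES
    have := card_pos.mpr ⟨j, hjES⟩
    have : #(I.filter (β · = 0)) + #S = #I := card_filter_add_card_filter_not _
    omega
  · rcases eq_or_ne (β i) 0 with h | h
    · exact .inr (mem_filter.mpr ⟨hi, h⟩)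
    · exact .inl ((nonneg_of_forall_dotProduct_nonneg hEI hβ hi).lt_of_ne' h)

variable (hVne : V.Nonempty) (hVc : IsCompact V) (hVconv : Convex ℝ V)
include hVne hVc hVconv

lemma exists_isFritzJohn_of_lt (hc : ∀ v ∈ V, v.1 ∈ constraintSet E I → v.2 < c) :
    ∃ b ≠ 0, IsFritzJohn (constraintSet E I) V c b := by
  obtain ⟨v₀, hv₀⟩ := hVne
  set Q := constraintSet E I ×ˢ Set.Ici c
  have hVQ : Disjoint V Q := Set.disjoint_left.mpr fun v hv hvQ => (hc v hv hvQ.1).not_ge hvQ.2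
  obtain ⟨f, s, t, hfV, hst, hfQ⟩ := geometric_hahn_banach_compact_closed hVconv hVc
    (convex_constraintSet.prod (convex_Ici c)) (isClosed_constraintSet.prod isClosed_Ici) hVQ
  have hlt : ∀ v ∈ V, ∀ q ∈ Q, f v < f q := fun v hv q hq =>
    (hfV v hv).trans (hst.trans (hfQ q hq))
  have hq₀ : ((0 : ι → ℝ), c) ∈ Q := ⟨⟨fun _ _ => rfl, fun _ _ => le_rfl⟩, Set.self_mem_Ici⟩
  -- `f` is bounded below on `Q`, so it is nonnegative on the recession directions of `Q`.
  have hrec : ∀ d, (∀ τ : ℝ, 0 ≤ τ → ((0 : ι → ℝ), c) + τ • d ∈ Q) → 0 ≤ f d := fun d hd =>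
    nonneg_of_forall_lt_add_mul fun τ hτ => by simpa using hlt v₀ hv₀ _ (hd τ hτ)
  obtain ⟨b, hb⟩ := exists_dotProduct_add_mul f
  refine ⟨b, ?_, ?_, fun w hw => ?_, fun v hv => ?_⟩
  · rintro rfl
    simpa [hb] using hlt v₀ hv₀ _ hq₀
  · simpa [hb] using hrec (0, 1) fun τ hτ => by simpa [Q] using ⟨hq₀.1, hτ⟩
  · simpa [hb] using hrec (w, 0) fun τ hτ => by simpa [Q] using smul_mem_constraintSet hw hτ
  · simpa [hb] using (hlt v hv _ hq₀).le

lemma exists_isFritzJohn (hc : ∀ v ∈ V, v.1 ∈ constraintSet E I → v.2 ≤ c) :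
    ∃ b ≠ 0, IsFritzJohn (constraintSet E I) V c b := by
  have hn (n : ℕ) : ∃ b ∈ Metric.sphere (0 : (ι → ℝ) × ℝ) 1,
      IsFritzJohn (constraintSet E I) V (c + 1 / (n + 1)) b := by
    obtain ⟨b, hb0, hb⟩ := exists_isFritzJohn_of_lt hVne hVc hVconv fun v hv hvC =>
      (hc v hv hvC).trans_lt (lt_add_of_pos_right c Nat.one_div_pos_of_nat)
    exact ⟨‖b‖⁻¹ • b, by simp [norm_smul, hb0], hb.smul (by positivity)⟩
  choose b hb_sphere hb using hn
  obtain ⟨b₀, hb₀, φ, hφ, hlim⟩ := (isCompact_sphere (0 : (ι → ℝ) × ℝ) 1).tendsto_subseq hb_sphere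
  have hc_lim : Tendsto (fun n => c + 1 / ((φ n : ℝ) + 1)) atTop (𝓝 c) := by
    simpa using (tendsto_one_div_add_atTop_nhds_zero_nat.comp hφ.tendsto_atTop).const_add c
  refine ⟨b₀, fun h => by simp [h] at hb₀, ?_⟩
  exact isClosed_setOf_isFritzJohn.mem_of_tendsto (hlim.prodMk_nhds hc_lim)
    (Eventually.of_forall fun n => hb (φ n))

theorem exists_multiplier (hVsymm : ∀ v ∈ V, -v ∈ V) (hEI : Disjoint E I)
    (hc : ∀ v ∈ V, v.1 ∈ constraintSet E I → v.2 ≤ c) :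
    ∃ a : ι → ℝ, (∀ i ∈ I, 0 ≤ a i) ∧ ∀ v ∈ V, v.2 + a ⬝ᵥ v.1 ≤ c := by
  classical
  induction hn : #E + #I using Nat.strong_induction_on generalizing E I with
  | _ n ih =>
  obtain ⟨b, hb₀, hb⟩ := exists_isFritzJohn hVne hVc hVconv hc
  rcases hb.1.lt_or_eq with hb₂ | hb₂
  · exact exists_multiplier_of_isFritzJohn hEI hb hb₂
  have hβV : ∀ v ∈ V, b.1 ⬝ᵥ v.1 = 0 := fun v hv => by
    have h₁ := hb.2.2 v hv
    have h₂ := hb.2.2 (-v) (hVsymm v hv)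
    simp only [← hb₂, zero_mul, add_zero, Prod.fst_neg, dotProduct_neg] at h₁ h₂
    linarith
  obtain ⟨E', I', hEI', hlt, hI', hmem⟩ :=
    exists_constraints_of_dotProduct_eq_zero hEI hb.2.1 fun h => hb₀ (Prod.ext h hb₂.symm)
  obtain ⟨a, ha, haV⟩ := ih _ (hn ▸ hlt) hEI' (fun v hv hvC => hc v hv (hmem _ (hβV v hv) hvC)) rfl
  obtain ⟨t, ht⟩ := exists_forall_nonneg_add_mul I
    (fun i hi => nonneg_of_forall_dotProduct_nonneg hEI hb.2.1 hi)
    (fun i hi => (hI' i hi).imp_right (ha i))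
  refine ⟨a + t • b.1, fun i hi => ht i hi, fun v hv => ?_⟩
  rw [add_dotProduct, smul_dotProduct, hβV v hv, smul_zero, add_zero]
  exact haV v hv

theorem exists_isSaddlePointOn_lagrangian (hVsymm : ∀ v ∈ V, -v ∈ V) :
    ∃ a ∈ Set.Ici (0 : ι → ℝ), ∃ v₀ ∈ V,
      IsSaddlePointOn (Set.Ici 0) V (fun a v => v.2 + a ⬝ᵥ v.1) a v₀ := by
  have h₀ : (0 : (ι → ℝ) × ℝ) ∈ V := by
    obtain ⟨v, hv⟩ := hVne
    simpa using hVconv hv (hVsymm v hv) (by norm_num : (0 : ℝ) ≤ 1 / 2)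
      (by norm_num : (0 : ℝ) ≤ 1 / 2) (by norm_num)
  obtain ⟨v₀, ⟨hv₀, hv₀_nonneg⟩, hmax⟩ :=
    (hVc.inter_right (isClosed_Ici.preimage continuous_fst)).exists_isMaxOn ⟨0, h₀, le_rfl⟩
      continuous_snd.continuousOn
  obtain ⟨a, ha, haV⟩ := exists_multiplier hVne hVc hVconv hVsymm (disjoint_empty_left univ)
    (c := v₀.2) fun v hv hvC => hmax ⟨hv, fun i => hvC.2 i (mem_univ i)⟩
  refine ⟨a, fun i => ha i (mem_univ i), v₀, hv₀, fun a' ha' v hv => ?_⟩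
  have := dotProduct_nonneg_of_nonneg ha' hv₀_nonneg
  have := haV v hv
  dsimp only
  linarith

end LagrangeMultipliers

section SaddlePoint

variable {α β : Type*} {S : Set α} {T : Set β} {f : α → β → ℝ} {a₀ : α} {p₀ : β}

lemma IsSaddlePointOn.csSup_image_eq (h : IsSaddlePointOn S T f a₀ p₀) (ha₀ : a₀ ∈ S)
    (hp₀ : p₀ ∈ T) : sSup (f a₀ '' T) = f a₀ p₀ :=
  IsGreatest.csSup_eq ⟨Set.mem_image_of_mem _ hp₀, Set.forall_mem_image.2 fun p hp => h a₀ ha₀ p hp⟩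

lemma IsSaddlePointOn.iInf_coe_eq (h : IsSaddlePointOn S T f a₀ p₀) (ha₀ : a₀ ∈ S)
    (hp₀ : p₀ ∈ T) : ⨅ a : S, (f a p₀ : EReal) = f a₀ p₀ :=
  le_antisymm (iInf_le_of_le ⟨a₀, ha₀⟩ le_rfl)
    (le_iInf fun a => EReal.coe_le_coe_iff.2 (h a a.2 p₀ hp₀))

lemma IsSaddlePointOn.iInf_coe_le (h : IsSaddlePointOn S T f a₀ p₀) (ha₀ : a₀ ∈ S) {p : β}
    (hp : p ∈ T) : ⨅ a : S, (f a p : EReal) ≤ f a₀ p₀ :=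
  iInf_le_of_le ⟨a₀, ha₀⟩ (EReal.coe_le_coe_iff.2 (h a₀ ha₀ p hp))

end SaddlePoint

section UtilityGap

variable {E : Type*} {N : ℕ} {X : Set E} {u₀ : E → ℝ} {u : Fin N → E → ℝ}

variable (u₀ u) in
def utilityGap (p : E × E) : (Fin N → ℝ) × ℝ :=
  (fun i => u i p.1 - u i p.2, u₀ p.2 - u₀ p.1)

lemma utilityGap_swap (p : E × E) : utilityGap u₀ u p.swap = -utilityGap u₀ u p := by
  ext <;> simp [utilityGap]

lemma continuousOn_utilityGap [TopologicalSpace E] (hu₀c : ContinuousOn u₀ X)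
    (huc : ∀ i, ContinuousOn (u i) X) : ContinuousOn (utilityGap u₀ u) (X ×ˢ X) := by
  have hfst : Set.MapsTo Prod.fst (X ×ˢ X) X := fun _ hp => hp.1
  have hsnd : Set.MapsTo Prod.snd (X ×ˢ X) X := fun _ hp => hp.2
  refine .prodMk (continuousOn_pi.2 fun i => ?_) ?_
  · exact ((huc i).comp continuousOn_fst hfst).sub ((huc i).comp continuousOn_snd hsnd)
  · exact (hu₀c.comp continuousOn_snd hsnd).sub (hu₀c.comp continuousOn_fst hfst)

lemma bddAbove_image_eta [TopologicalSpace E] (hXcomp : IsCompact X)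
    (hu₀c : ContinuousOn u₀ X) (huc : ∀ i, ContinuousOn (u i) X) (a : Fin N → ℝ) :
    BddAbove ((fun p : E × E => eta u₀ u p.1 p.2 a) '' (X ×ˢ X)) :=
  ((hXcomp.prod hXcomp).image_of_continuousOn
    ((by fun_prop : Continuous fun v : (Fin N → ℝ) × ℝ => v.2 + a ⬝ᵥ v.1).comp_continuousOn
      (continuousOn_utilityGap hu₀c huc))).bddAbove

variable [AddCommGroup E] [Module ℝ E]

lemma Convex.image_of_map_combo {F : Type*} [AddCommGroup F] [Module ℝ F] {s : Set E}
    (hs : Convex ℝ s) {g : E → F} (hg : ∀ x ∈ s, ∀ y ∈ s, ∀ l : ℝ, 0 ≤ l → l ≤ 1 →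
      g (l • x + (1 - l) • y) = l • g x + (1 - l) • g y) :
    Convex ℝ (g '' s) := by
  rintro _ ⟨x, hx, rfl⟩ _ ⟨y, hy, rfl⟩ l m hl hm hlm
  obtain rfl : m = 1 - l := by linarith
  exact ⟨_, hs hx hy hl hm hlm, hg x hx y hy l hl (by linarith)⟩

lemma convex_image_utilityGap (hXconv : Convex ℝ X)
    (haff₀ : ∀ x ∈ X, ∀ y ∈ X, ∀ l : ℝ, 0 ≤ l → l ≤ 1 →
      u₀ (l • x + (1 - l) • y) = l * u₀ x + (1 - l) * u₀ y)
    (haff : ∀ i : Fin N, ∀ x ∈ X, ∀ y ∈ X, ∀ l : ℝ, 0 ≤ l → l ≤ 1 →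
      u i (l • x + (1 - l) • y) = l * u i x + (1 - l) * u i y) :
    Convex ℝ (utilityGap u₀ u '' (X ×ˢ X)) := by
  refine (hXconv.prod hXconv).image_of_map_combo fun p hp q hq l hl₀ hl₁ => ?_
  ext
  all_goals
    simp only [utilityGap, Prod.fst_add, Prod.snd_add, Prod.smul_fst, Prod.smul_snd, Pi.add_apply,
      Pi.smul_apply, smul_eq_mul, haff _ _ hp.1 _ hq.1 l hl₀ hl₁, haff _ _ hp.2 _ hq.2 l hl₀ hl₁,
      haff₀ _ hp.1 _ hq.1 l hl₀ hl₁, haff₀ _ hp.2 _ hq.2 l hl₀ hl₁]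
    ring

theorem exists_isSaddlePointOn_eta [TopologicalSpace E] (hXne : X.Nonempty)
    (hXconv : Convex ℝ X) (hXcomp : IsCompact X)
    (hu₀c : ContinuousOn u₀ X) (huc : ∀ i, ContinuousOn (u i) X)
    (haff₀ : ∀ x ∈ X, ∀ y ∈ X, ∀ l : ℝ, 0 ≤ l → l ≤ 1 →
      u₀ (l • x + (1 - l) • y) = l * u₀ x + (1 - l) * u₀ y)
    (haff : ∀ i : Fin N, ∀ x ∈ X, ∀ y ∈ X, ∀ l : ℝ, 0 ≤ l → l ≤ 1 →
      u i (l • x + (1 - l) • y) = l * u i x + (1 - l) * u i y) :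
    ∃ a ∈ Set.Ici (0 : Fin N → ℝ), ∃ p ∈ X ×ˢ X,
      IsSaddlePointOn (Set.Ici 0) (X ×ˢ X) (fun a p => eta u₀ u p.1 p.2 a) a p := by
  obtain ⟨a, ha, _, ⟨p, hp, rfl⟩, h⟩ := exists_isSaddlePointOn_lagrangian
    ((hXne.prod hXne).image _)
    ((hXcomp.prod hXcomp).image_of_continuousOn (continuousOn_utilityGap hu₀c huc))
    (convex_image_utilityGap hXconv haff₀ haff)
    (by rintro _ ⟨q, hq, rfl⟩; exact ⟨q.swap, hq.symm, utilityGap_swap q⟩)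
  exact ⟨a, ha, p, hp, fun a' ha' q hq => h a' ha' _ (Set.mem_image_of_mem _ hq)⟩

end UtilityGap

theorem stmt2_general {E : Type*} [AddCommGroup E] [Module ℝ E] [TopologicalSpace E]
    {N : ℕ} (X : Set E) (hXne : X.Nonempty) (hXconv : Convex ℝ X)
    (hXcomp : IsCompact X)
    (u₀ : E → ℝ) (u : Fin N → E → ℝ)
    (hu₀c : ContinuousOn u₀ X) (huc : ∀ i, ContinuousOn (u i) X)
    (haff₀ : ∀ x ∈ X, ∀ y ∈ X, ∀ l : ℝ, 0 ≤ l → l ≤ 1 →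
      u₀ (l • x + (1 - l) • y) = l * u₀ x + (1 - l) * u₀ y)
    (haff : ∀ i : Fin N, ∀ x ∈ X, ∀ y ∈ X, ∀ l : ℝ, 0 ≤ l → l ≤ 1 →
      u i (l • x + (1 - l) • y) = l * u i x + (1 - l) * u i y) :
    ∃ x' ∈ X, ∃ y' ∈ X, ∃ a' : Fin N → ℝ, (∀ i, 0 ≤ a' i) ∧
      -- the outer maximum on the left-hand side is attained at (x', y')
      (∀ x ∈ X, ∀ y ∈ X,
        (⨅ a : {a : Fin N → ℝ // ∀ i, 0 ≤ a i}, ((eta u₀ u x y a.1 : ℝ) : EReal)) ≤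
          ⨅ a : {a : Fin N → ℝ // ∀ i, 0 ≤ a i}, ((eta u₀ u x' y' a.1 : ℝ) : EReal)) ∧
      -- the outer minimum on the right-hand side is attained at a'
      (∀ a : Fin N → ℝ, (∀ i, 0 ≤ a i) →
        sSup ((fun p : E × E => eta u₀ u p.1 p.2 a') '' (X ×ˢ X)) ≤
          sSup ((fun p : E × E => eta u₀ u p.1 p.2 a) '' (X ×ˢ X))) ∧
      -- the inner maximum on the right-hand side is attained
      (∃ x'' ∈ X, ∃ y'' ∈ X,
        eta u₀ u x'' y'' a' = sSup ((fun p : E × E => eta u₀ u p.1 p.2 a') '' (X ×ˢ X))) ∧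
      -- the two values agree
      (⨅ a : {a : Fin N → ℝ // ∀ i, 0 ≤ a i}, ((eta u₀ u x' y' a.1 : ℝ) : EReal)) =
        ((sSup ((fun p : E × E => eta u₀ u p.1 p.2 a') '' (X ×ˢ X)) : ℝ) : EReal) := by
  obtain ⟨a', ha', p, hp, h⟩ :=
    exists_isSaddlePointOn_eta hXne hXconv hXcomp hu₀c huc haff₀ haff
  have hsup : sSup ((fun p : E × E => eta u₀ u p.1 p.2 a') '' (X ×ˢ X)) = eta u₀ u p.1 p.2 a' :=
    h.csSup_image_eq ha' hp
  have hinf : ⨅ a : {a : Fin N → ℝ // ∀ i, 0 ≤ a i}, ((eta u₀ u p.1 p.2 a.1 : ℝ) : EReal) =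
      eta u₀ u p.1 p.2 a' :=
    h.iInf_coe_eq ha' hp
  refine ⟨p.1, hp.1, p.2, hp.2, a', ha', fun x hx y hy => ?_, fun a ha => ?_,
    ⟨p.1, hp.1, p.2, hp.2, hsup.symm⟩, by rw [hinf, hsup]⟩
  · rw [hinf]
    exact h.iInf_coe_le ha' (Set.mk_mem_prod hx hy)
  · rw [hsup]
    exact (h a ha p hp).trans (le_csSup (bddAbove_image_eta hXcomp hu₀c huc a) (Set.mem_image_of_mem _ hp))

/-- minimax property of `η`.  In a setting with vN-M utilities where
`X` is a compact subset of a real topological vector space and `u₀, u₁, …, u_N` are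
continuous, `η` has the minimax property
`max_{(x,y)∈X×X} inf_{a∈ℝ₊^N} η(x,y,a) = min_{a∈ℝ₊^N} max_{(x,y)∈X×X} η(x,y,a)`,
with the outer maximum on the left and the outer minimum on the right attained
(the inner infimum is taken in `ℝ ∪ {−∞}`, i.e. in `EReal`; the inner maximum on the
right is attained as well). -/
theorem stmt2 {E : Type*} [AddCommGroup E] [Module ℝ E] [TopologicalSpace E]
    [IsTopologicalAddGroup E] [ContinuousSMul ℝ E]
    {N : ℕ} (hN : 1 ≤ N) (X : Set E) (hXne : X.Nonempty) (hXconv : Convex ℝ X)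
    (hXcomp : IsCompact X)
    (u₀ : E → ℝ) (u : Fin N → E → ℝ)
    (hu₀c : ContinuousOn u₀ X) (huc : ∀ i, ContinuousOn (u i) X)
    (haff₀ : ∀ x ∈ X, ∀ y ∈ X, ∀ l : ℝ, 0 ≤ l → l ≤ 1 →
      u₀ (l • x + (1 - l) • y) = l * u₀ x + (1 - l) * u₀ y)
    (haff : ∀ i : Fin N, ∀ x ∈ X, ∀ y ∈ X, ∀ l : ℝ, 0 ≤ l → l ≤ 1 →
      u i (l • x + (1 - l) • y) = l * u i x + (1 - l) * u i y) :
    ∃ x' ∈ X, ∃ y' ∈ X, ∃ a' : Fin N → ℝ, (∀ i, 0 ≤ a' i) ∧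
      -- the outer maximum on the left-hand side is attained at (x', y')
      (∀ x ∈ X, ∀ y ∈ X,
        (⨅ a : {a : Fin N → ℝ // ∀ i, 0 ≤ a i}, ((eta u₀ u x y a.1 : ℝ) : EReal)) ≤
          ⨅ a : {a : Fin N → ℝ // ∀ i, 0 ≤ a i}, ((eta u₀ u x' y' a.1 : ℝ) : EReal)) ∧
      -- the outer minimum on the right-hand side is attained at a'
      (∀ a : Fin N → ℝ, (∀ i, 0 ≤ a i) →
        sSup ((fun p : E × E => eta u₀ u p.1 p.2 a') '' (X ×ˢ X)) ≤
          sSup ((fun p : E × E => eta u₀ u p.1 p.2 a) '' (X ×ˢ X))) ∧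
      -- the inner maximum on the right-hand side is attained
      (∃ x'' ∈ X, ∃ y'' ∈ X,
        eta u₀ u x'' y'' a' = sSup ((fun p : E × E => eta u₀ u p.1 p.2 a') '' (X ×ˢ X))) ∧
      -- the two values agree
      (⨅ a : {a : Fin N → ℝ // ∀ i, 0 ≤ a i}, ((eta u₀ u x' y' a.1 : ℝ) : EReal)) =
        ((sSup ((fun p : E × E => eta u₀ u p.1 p.2 a') '' (X ×ˢ X)) : ℝ) : EReal) :=
  stmt2_general X hXne hXconv hXcomp u₀ u hu₀c huc haff₀ haff
end

section
/- Let ε ≥ 0 and let (X, u₀, {u₁,…,u_N}) be a setting with vN-M utilities in which X is additionally a compact subset of a real topological vector space and u₀, u₁, …, u_N are continuous. The following are equivalent: (i) the pair (u₀, {u₁,…,u_N}) satisfies ε-Semistrong Pareto; (ii) there exists a utilitarian aggregator w ∈ W₊ with ‖u₀ − w‖∞ ≤ ε/2. -/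
/-!
Let `D = {(u x - u y, u₀ x - u₀ y) | x, y ∈ X} ⊆ ℝᴺ × ℝ`; it is compact, convex and symmetric.
`ε`-Semistrong Pareto says that `z.2 ≤ ε` whenever `z ∈ D` and `z.1 ≤ 0`, and what is needed are
Lagrange multipliers `a ≥ 0` with `z.2 ≤ ε + a ⬝ᵥ z.1` on `D`: then `u₀ - a ⬝ᵥ u` oscillates by at
most `ε` on `X`, and centring it gives `b`.

Strictly separating `D` from `{z | z.1 ≤ 0 ∧ ε + δ ≤ z.2}` gives multipliers for `ε + δ`, `δ > 0`.
If they stay bounded as `δ → 0`, compactness gives multipliers for `ε`. Otherwise a normalised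
limit `c ≥ 0` satisfies `c ⬝ᵥ z.1 ≥ 0` on `D`, hence `c ⬝ᵥ z.1 = 0` by symmetry; subtracting a
multiple of `c` from any multiplier kills one of its coordinates, and induction on the support of
the multipliers concludes.
-/

open Filter Topology Set Pointwise

theorem nonneg_of_forall_lt_add_mul_s5 {x y v : ℝ} (h : ∀ t ≥ (0 : ℝ), v < x + t * y) : 0 ≤ y := by
  by_contra! hy
  have := h ((x - v) / -y) (div_nonneg (by linarith [h 0 le_rfl]) (by linarith))
  have hxv : (x - v) / -y * y = v - x := by rw [div_neg, neg_mul, div_mul_cancel₀ _ hy.ne]; ring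
  linarith

theorem nonneg_of_forall_nat_le_mul {x k : ℝ} (h : ∀ n : ℕ, -k ≤ n * x) : 0 ≤ x := by
  by_contra! hx
  obtain ⟨n, hn⟩ := exists_nat_gt (k / -x)
  have := h n
  rw [div_lt_iff₀ (neg_pos.mpr hx)] at hn
  nlinarith

theorem exists_forall_pos_of_forall_pos_exists {κ : Type*} {F : Finset κ} {P : κ → ℝ → Prop}
    (hP : ∀ i δ δ', δ ≤ δ' → P i δ → P i δ') (h : ∀ δ > 0, ∃ i ∈ F, P i δ) :
    ∃ i ∈ F, ∀ δ > 0, P i δ := by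
  have hfreq : ∃ᶠ δ in 𝓝[Ioi 0] 0, ∃ i ∈ F, P i δ :=
    (eventually_nhdsWithin_of_forall (s := Ioi 0) h).frequently
  obtain ⟨i, hi, hPi⟩ := F.frequently_exists.mp hfreq
  refine ⟨i, hi, fun δ hδ ↦ ?_⟩
  obtain ⟨δ', hδ', hδ'δ⟩ := (hPi.and_eventually (Ioo_mem_nhdsGT hδ)).exists
  exact hP i δ' δ hδ'δ.2.le hδ'

theorem exists_forall_abs_sub_le_half {α : Type*} {X : Set α} (hX : X.Nonempty) {g : α → ℝ}
    {ε : ℝ} (h : ∀ x ∈ X, ∀ y ∈ X, g x - g y ≤ ε) : ∃ b, ∀ x ∈ X, |g x - b| ≤ ε / 2 := by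
  obtain ⟨x₀, hx₀⟩ := hX
  have hne : (g '' X).Nonempty := ⟨_, mem_image_of_mem g hx₀⟩
  have hbdd_above : BddAbove (g '' X) := ⟨g x₀ + ε, by
    rintro _ ⟨x, hx, rfl⟩
    linarith [h x hx x₀ hx₀]⟩
  have hbdd_below : BddBelow (g '' X) := ⟨g x₀ - ε, by
    rintro _ ⟨x, hx, rfl⟩
    linarith [h x₀ hx₀ x hx]⟩
  have hosc : sSup (g '' X) ≤ sInf (g '' X) + ε := by
    refine csSup_le hne ?_
    rintro _ ⟨x, hx, rfl⟩
    rw [← sub_le_iff_le_add]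
    exact le_csInf hne (by rintro _ ⟨y, hy, rfl⟩; linarith [h x hx y hy])
  refine ⟨(sSup (g '' X) + sInf (g '' X)) / 2, fun x hx ↦ abs_le.mpr ⟨?_, ?_⟩⟩ <;>
    linarith [le_csSup hbdd_above (mem_image_of_mem g hx),
      csInf_le hbdd_below (mem_image_of_mem g hx)]

theorem Convex.image_of_map_convexCombination {E F : Type*} [AddCommGroup E] [Module ℝ E]
    [AddCommGroup F] [Module ℝ F] {X : Set E} (hX : Convex ℝ X) {G : E → F}
    (hG : ∀ x ∈ X, ∀ y ∈ X, ∀ l : ℝ, 0 ≤ l → l ≤ 1 →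
      G (l • x + (1 - l) • y) = l • G x + (1 - l) • G y) :
    Convex ℝ (G '' X) := by
  rintro _ ⟨x, hx, rfl⟩ _ ⟨y, hy, rfl⟩ l m hl hm hlm
  obtain rfl : m = 1 - l := by linarith
  exact ⟨l • x + (1 - l) • y, hX hx hy hl hm hlm, hG x hx y hy l hl (by linarith)⟩

section

variable {ι : Type*} [Fintype ι]

def multipliers (D : Set ((ι → ℝ) × ℝ)) (s : Finset ι) (ε : ℝ) : Set (ι → ℝ) :=
  {a | 0 ≤ a ∧ (∀ i ∉ s, a i = 0) ∧ ∀ z ∈ D, z.2 ≤ ε + a ⬝ᵥ z.1}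

section multipliers

variable {D : Set ((ι → ℝ) × ℝ)} {s t : Finset ι} {ε ε' : ℝ}

theorem multipliers_mono (hst : s ⊆ t) (hε : ε ≤ ε') :
    multipliers D s ε ⊆ multipliers D t ε' :=
  fun _ ⟨ha0, has, ha⟩ ↦
    ⟨ha0, fun i hi ↦ has i (fun h ↦ hi (hst h)), fun z hz ↦ (ha z hz).trans (by linarith)⟩

theorem isClosed_multipliers : IsClosed (multipliers D s ε) := by
  have : multipliers D s ε = Ici 0 ∩ (⋂ i ∉ s, {a | a i = 0}) ∩
      ⋂ z ∈ D, {a | z.2 ≤ ε + a ⬝ᵥ z.1} := by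
    ext; simp [multipliers, and_assoc]
  rw [this]
  refine (isClosed_Ici.inter (isClosed_biInter fun i _ ↦ ?_)).inter
    (isClosed_biInter fun z _ ↦ ?_)
  · exact isClosed_eq (continuous_apply i) continuous_const
  · exact isClosed_le continuous_const
      (continuous_const.add (continuous_id.dotProduct continuous_const))

theorem mem_multipliers_of_forall_pos {a : ι → ℝ}
    (h : ∀ δ > 0, a ∈ multipliers D s (ε + δ)) : a ∈ multipliers D s ε := by
  obtain ⟨ha0, has, -⟩ := h 1 one_pos
  refine ⟨ha0, has, fun z hz ↦ le_of_forall_pos_le_add fun δ hδ ↦ ?_⟩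
  linarith [(h δ hδ).2.2 z hz]

theorem nonempty_multipliers_of_isCompact (hK : IsCompact (multipliers D s (ε + 1)))
    (h : ∀ δ > 0, (multipliers D s (ε + δ)).Nonempty) : (multipliers D s ε).Nonempty := by
  obtain ⟨a, ha⟩ := IsCompact.nonempty_iInter_of_sequence_nonempty_isCompact_isClosed
    (fun n : ℕ ↦ multipliers D s (ε + 1 / (n + 1)))
    (fun n ↦ multipliers_mono subset_rfl (by gcongr; simp)) (fun n ↦ h _ (by positivity))
    (by simpa using hK) (fun _ ↦ isClosed_multipliers)
  refine ⟨a, mem_multipliers_of_forall_pos fun δ hδ ↦ ?_⟩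
  obtain ⟨n, hn⟩ := exists_nat_one_div_lt hδ
  exact multipliers_mono subset_rfl (by linarith) (mem_iInter.mp ha n)

theorem exists_nonempty_multipliers_erase [DecidableEq ι] {c a : ι → ℝ}
    (hc : c ∈ stdSimplex ℝ ι) (hcs : ∀ i ∉ s, c i = 0) (horth : ∀ z ∈ D, c ⬝ᵥ z.1 = 0)
    (ha : a ∈ multipliers D s ε) : ∃ i ∈ s, (multipliers D (s.erase i) ε).Nonempty := by
  obtain ⟨ha0, has, haD⟩ := ha
  set F := Finset.univ.filter fun i ↦ 0 < c i
  have hF : F.Nonempty := by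
    obtain ⟨i, hi⟩ : ∃ i, 0 < c i := by
      by_contra! h
      linarith [hc.2, Finset.sum_nonpos fun i (_ : i ∈ Finset.univ) ↦ h i]
    exact ⟨i, by simp [F, hi]⟩
  obtain ⟨i, hiF, hmin⟩ := F.exists_min_image (fun j ↦ a j / c j) hF
  have hci : 0 < c i := (Finset.mem_filter.mp hiF).2
  have his : i ∈ s := by_contra fun h ↦ hci.ne' (hcs i h)
  -- move `a` along the null direction `c` until one of its coordinates vanishes
  refine ⟨i, his, a - (a i / c i) • c, fun j ↦ ?_, fun j hj ↦ ?_, fun z hz ↦ ?_⟩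
  · rcases (hc.1 j).lt_or_eq with hcj | hcj
    · have := hmin j (by simp [F, hcj])
      rw [le_div_iff₀ hcj] at this
      simpa using this
    · simpa [← hcj] using ha0 j
  · by_cases hji : j = i
    · subst hji
      simp [hci.ne']
    · have hjs : j ∉ s := by simpa [hji] using hj
      simp [has j hjs, hcs j hjs]
  · rw [sub_dotProduct, smul_dotProduct, horth z hz, smul_zero, sub_zero]
    exact haD z hz

theorem exists_mem_stdSimplex_dotProduct_nonneg_of_not_isBounded
    (h : ¬Bornology.IsBounded (multipliers D s ε)) :
    ∃ c ∈ stdSimplex ℝ ι, (∀ i ∉ s, c i = 0) ∧ ∀ z ∈ D, 0 ≤ c ⬝ᵥ z.1 := by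
  have hlarge : ∀ C : ℝ, ∃ a ∈ multipliers D s ε, C < ∑ i, a i := by
    intro C
    by_contra! hC
    refine h ((Metric.isBounded_Icc (0 : ι → ℝ) fun _ ↦ C).subset fun a ha ↦ ⟨ha.1, fun i ↦ ?_⟩)
    exact (Finset.single_le_sum (fun j _ ↦ ha.1 j) (Finset.mem_univ i)).trans (hC a ha)
  -- `T n` contains the normalisation of every multiplier of mass at least `n`
  let T : ℕ → Set (ι → ℝ) := fun n ↦ stdSimplex ℝ ι ∩
    {c | (∀ i ∉ s, c i = 0) ∧ ∀ z ∈ D, -|z.2 - ε| ≤ n * c ⬝ᵥ z.1}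
  have hT_closed (n : ℕ) : IsClosed (T n) := by
    have : T n = stdSimplex ℝ ι ∩ ((⋂ i ∉ s, {c | c i = 0}) ∩
        ⋂ z ∈ D, {c | -|z.2 - ε| ≤ n * c ⬝ᵥ z.1}) := by
      ext; simp [T]
    rw [this]
    refine (isClosed_stdSimplex ℝ ι).inter ((isClosed_biInter fun i _ ↦ ?_).inter
      (isClosed_biInter fun z _ ↦ ?_))
    · exact isClosed_eq (continuous_apply i) continuous_const
    · exact isClosed_le continuous_const
        (continuous_const.mul (continuous_id.dotProduct continuous_const))
  have hT_anti (n : ℕ) : T (n + 1) ⊆ T n := by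
    refine fun c ⟨hc, hcs, hcD⟩ ↦ ⟨hc, hcs, fun z hz ↦ ?_⟩
    have := hcD z hz
    rcases le_or_gt 0 (c ⬝ᵥ z.1) with hpos | hneg
    · nlinarith [abs_nonneg (z.2 - ε)]
    · push_cast at this
      nlinarith
  have hT_nonempty (n : ℕ) : (T n).Nonempty := by
    obtain ⟨a, ⟨ha0, has, haD⟩, hna⟩ := hlarge n
    have hsum : 0 < ∑ i, a i := lt_of_le_of_lt n.cast_nonneg hna
    refine ⟨(∑ i, a i)⁻¹ • a, ⟨fun i ↦ ?_, ?_⟩, fun i hi ↦ by simp [has i hi], fun z hz ↦ ?_⟩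
    · exact mul_nonneg (inv_nonneg.mpr hsum.le) (ha0 i)
    · simp [← Finset.mul_sum, hsum.ne']
    · rw [smul_dotProduct, smul_eq_mul]
      have h1 := haD z hz
      rcases le_or_gt 0 (a ⬝ᵥ z.1) with hpos | hneg
      · have := mul_nonneg (inv_nonneg.mpr hsum.le) hpos
        nlinarith [abs_nonneg (z.2 - ε)]
      · have : n * ((∑ i, a i)⁻¹ * a ⬝ᵥ z.1) ≥ a ⬝ᵥ z.1 := by
          rw [← mul_assoc, ← div_eq_mul_inv]
          have : (n : ℝ) / ∑ i, a i ≤ 1 := (div_le_one hsum).mpr hna.le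
          nlinarith
        linarith [neg_abs_le (z.2 - ε)]
  obtain ⟨c, hc⟩ := IsCompact.nonempty_iInter_of_sequence_nonempty_isCompact_isClosed T hT_anti
    hT_nonempty ((isCompact_stdSimplex ℝ ι).of_isClosed_subset (hT_closed 0) inter_subset_left)
    hT_closed
  have hcT (n : ℕ) : c ∈ T n := mem_iInter.mp hc n
  exact ⟨c, (hcT 0).1, (hcT 0).2.1,
    fun z hz ↦ nonneg_of_forall_nat_le_mul fun n ↦ (hcT n).2.2 z hz⟩

theorem nonempty_multipliers_of_forall_pos (hD : ∀ z ∈ D, -z ∈ D)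
    (s : Finset ι) (h : ∀ δ > 0, (multipliers D s (ε + δ)).Nonempty) :
    (multipliers D s ε).Nonempty := by
  classical
  induction s using Finset.strongInduction with
  | H s ih =>
  by_cases hnull : ∃ c ∈ stdSimplex ℝ ι, (∀ i ∉ s, c i = 0) ∧ ∀ z ∈ D, c ⬝ᵥ z.1 = 0
  · obtain ⟨c, hc, hcs, horth⟩ := hnull
    obtain ⟨i, hi, hδ⟩ := exists_forall_pos_of_forall_pos_exists
      (P := fun i δ ↦ (multipliers D (s.erase i) (ε + δ)).Nonempty)
      (fun i δ δ' hδ ⟨a, ha⟩ ↦ ⟨a, multipliers_mono subset_rfl (by linarith) ha⟩)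
      (fun δ hδ ↦ exists_nonempty_multipliers_erase hc hcs horth (h δ hδ).some_mem)
    obtain ⟨a, ha⟩ := ih _ (Finset.erase_ssubset hi) hδ
    exact ⟨a, multipliers_mono (s.erase_subset i) le_rfl ha⟩
  · refine nonempty_multipliers_of_isCompact
      (Metric.isCompact_of_isClosed_isBounded isClosed_multipliers ?_) h
    by_contra hunb
    obtain ⟨c, hc, hcs, hnonneg⟩ :=
      exists_mem_stdSimplex_dotProduct_nonneg_of_not_isBounded hunb
    refine hnull ⟨c, hc, hcs, fun z hz ↦ le_antisymm ?_ (hnonneg z hz)⟩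
    simpa using hnonneg (-z) (hD z hz)

end multipliers

theorem nonempty_multipliers_add_of_isCompact {D : Set ((ι → ℝ) × ℝ)} {ε δ : ℝ}
    (hDconv : Convex ℝ D) (hDcomp : IsCompact D) (h0 : 0 ∈ D)
    (hH : ∀ z ∈ D, z.1 ≤ 0 → z.2 ≤ ε) (hδ : 0 < δ) :
    (multipliers D Finset.univ (ε + δ)).Nonempty := by
  classical
  let Q : Set ((ι → ℝ) × ℝ) := Iic 0 ×ˢ Ici (ε + δ)
  have hdisj : Disjoint D Q := disjoint_left.mpr fun z hz hzQ ↦ by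
    linarith [hH z hz hzQ.1, show ε + δ ≤ z.2 from hzQ.2]
  obtain ⟨f, u, v, hfD, huv, hfQ⟩ := geometric_hahn_banach_compact_closed hDconv hDcomp
    ((convex_Iic 0).prod (convex_Ici _)) (isClosed_Iic.prod isClosed_Ici) hdisj
  let q : (ι → ℝ) × ℝ := (0, ε + δ)
  -- `f` is bounded below on `Q`, which contains the ray from `q` along any such `w`
  have hf_ray (w : (ι → ℝ) × ℝ) (hw₁ : w.1 ≤ 0) (hw₂ : 0 ≤ w.2) : 0 ≤ f w :=
    nonneg_of_forall_lt_add_mul_s5 fun t ht ↦ by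
      simpa using hfQ (q + t • w) ⟨by simpa [q] using smul_nonpos_of_nonneg_of_nonpos ht hw₁,
        by simpa [q] using mul_nonneg ht hw₂⟩
  let g : (ι → ℝ) →ₗ[ℝ] ℝ := f.comp (ContinuousLinearMap.inl ℝ (ι → ℝ) ℝ)
  let α : ι → ℝ := (dotProductEquiv ℝ ι).symm g
  let c : ℝ := f (0, 1)
  have hα : α ≤ 0 := fun i ↦ by
    have := hf_ray (-(Pi.single i 1, 0)) (by simp [Pi.single_nonneg]) (by simp)
    rw [map_neg] at this
    simpa [α, g] using this
  have hf (z : (ι → ℝ) × ℝ) : f z = α ⬝ᵥ z.1 + c * z.2 := by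
    have hz : z = (z.1, 0) + z.2 • ((0 : ι → ℝ), (1 : ℝ)) := by ext <;> simp
    have hfz : f z = f (z.1, 0) + z.2 * c := by
      conv_lhs => rw [hz]
      rw [map_add, map_smul, smul_eq_mul]
    rw [hfz, mul_comm]
    congr 1
    exact (LinearMap.congr_fun ((dotProductEquiv ℝ ι).apply_symm_apply g) z.1).symm
  have hfq : v < c * (ε + δ) := by
    simpa [hf, q] using hfQ q (mk_mem_prod self_mem_Iic self_mem_Ici)
  have hc : 0 < c := by
    refine (hf_ray (0, 1) le_rfl zero_le_one).lt_of_ne fun hc ↦ ?_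
    linarith [hfD 0 h0, map_zero f, show c * (ε + δ) = 0 by simp [c, ← hc]]
  refine ⟨-c⁻¹ • α, fun i ↦ ?_, by simp, fun z hz ↦ ?_⟩
  · simpa using mul_nonneg (inv_nonneg.mpr hc.le) (neg_nonneg.mpr (hα i))
  · have hz : α ⬝ᵥ z.1 + c * z.2 < (ε + δ) * c := by linarith [hf z ▸ hfD z hz]
    have : ε + δ + (-c⁻¹ • α) ⬝ᵥ z.1 = ((ε + δ) * c - α ⬝ᵥ z.1) / c := by
      rw [neg_smul, neg_dotProduct, smul_dotProduct, smul_eq_mul]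
      field_simp
      ring
    rw [this, le_div_iff₀ hc]
    linarith

theorem exists_nonneg_forall_sub_le_add_dotProduct {A : Set ((ι → ℝ) × ℝ)} {ε : ℝ}
    (hA : A.Nonempty) (hAconv : Convex ℝ A) (hAcomp : IsCompact A)
    (hpareto : ∀ p ∈ A, ∀ q ∈ A, p.1 ≤ q.1 → p.2 - ε ≤ q.2) :
    ∃ a : ι → ℝ, 0 ≤ a ∧ ∀ p ∈ A, ∀ q ∈ A, p.2 - q.2 ≤ ε + a ⬝ᵥ (p.1 - q.1) := by
  have hsymm : ∀ z ∈ A - A, -z ∈ A - A := by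
    rintro _ ⟨p, hp, q, hq, rfl⟩
    exact neg_sub p q ▸ sub_mem_sub hq hp
  have h0 : (0 : (ι → ℝ) × ℝ) ∈ A - A := by
    obtain ⟨p, hp⟩ := hA
    exact sub_self p ▸ sub_mem_sub hp hp
  have hH : ∀ z ∈ A - A, z.1 ≤ 0 → z.2 ≤ ε := by
    rintro _ ⟨p, hp, q, hq, rfl⟩ hz
    have := hpareto p hp q hq (sub_nonpos.mp hz)
    simp only [Prod.snd_sub]
    linarith
  have hcomp : IsCompact (A - A) := by simpa [sub_eq_add_neg] using hAcomp.add hAcomp.neg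
  obtain ⟨a, ha0, -, ha⟩ := nonempty_multipliers_of_forall_pos hsymm Finset.univ fun δ hδ ↦
    nonempty_multipliers_add_of_isCompact (hAconv.sub hAconv) hcomp h0 hH hδ
  exact ⟨a, ha0, fun p hp q hq ↦ ha (p - q) (sub_mem_sub hp hq)⟩

end

theorem stmt5_general {E : Type*} [AddCommGroup E] [Module ℝ E] [TopologicalSpace E]
    {N : ℕ} {ε : ℝ}
    (X : Set E) (hXne : X.Nonempty) (hXconv : Convex ℝ X) (hXcomp : IsCompact X)
    (u₀ : E → ℝ) (u : Fin N → E → ℝ)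
    (hu₀c : ContinuousOn u₀ X) (huc : ∀ i, ContinuousOn (u i) X)
    (haff₀ : ∀ x ∈ X, ∀ y ∈ X, ∀ l : ℝ, 0 ≤ l → l ≤ 1 →
      u₀ (l • x + (1 - l) • y) = l * u₀ x + (1 - l) * u₀ y)
    (haff : ∀ i : Fin N, ∀ x ∈ X, ∀ y ∈ X, ∀ l : ℝ, 0 ≤ l → l ≤ 1 →
      u i (l • x + (1 - l) • y) = l * u i x + (1 - l) * u i y) :
    (∀ x ∈ X, ∀ y ∈ X, (∀ i, u i y ≤ u i x) → u₀ y - ε ≤ u₀ x) ↔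
      (∃ (a : Fin N → ℝ) (b : ℝ), (∀ i, 0 ≤ a i) ∧
        ∀ x ∈ X, |u₀ x - ((∑ i, a i * u i x) + b)| ≤ ε / 2) := by
  constructor
  · intro hpareto
    let G : E → (Fin N → ℝ) × ℝ := fun x ↦ (fun i ↦ u i x, u₀ x)
    have hGconv : Convex ℝ (G '' X) := hXconv.image_of_map_convexCombination
      fun x hx y hy l hl₀ hl₁ ↦
        Prod.ext (funext fun i ↦ haff i x hx y hy l hl₀ hl₁) (haff₀ x hx y hy l hl₀ hl₁)
    obtain ⟨a, ha₀, ha⟩ := exists_nonneg_forall_sub_le_add_dotProduct (hXne.image G) hGconv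
      (hXcomp.image_of_continuousOn ((continuousOn_pi.mpr huc).prodMk hu₀c))
      (by rintro _ ⟨y, hy, rfl⟩ _ ⟨x, hx, rfl⟩ hyx; exact hpareto x hx y hy hyx)
    obtain ⟨b, hb⟩ := exists_forall_abs_sub_le_half (g := fun x ↦ u₀ x - a ⬝ᵥ fun i ↦ u i x)
      hXne fun x hx y hy ↦ by
        have := ha _ (mem_image_of_mem G hx) _ (mem_image_of_mem G hy)
        simp only [G, dotProduct_sub] at this
        linarith
    exact ⟨a, b, ha₀, fun x hx ↦ by simpa [sub_sub, dotProduct] using hb x hx⟩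
  · rintro ⟨a, b, ha, hw⟩ x hx y hy hyx
    have hsum : ∑ i, a i * u i y ≤ ∑ i, a i * u i x :=
      Finset.sum_le_sum fun i _ ↦ mul_le_mul_of_nonneg_left (hyx i) (ha i)
    linarith [abs_le.mp (hw x hx), abs_le.mp (hw y hy)]

/-- Theorem: aggregation with `ε`-Semistrong Pareto, compact case.
Let `ε ≥ 0` and let `(X, u₀, {u₁,…,u_N})` be a setting with vN-M utilities where `X`
is a compact subset of a real topological vector space and all utilities are
continuous.  Then `ε`-Semistrong Pareto holds iff there is a utilitarian aggregator
`w = Σᵢ aᵢ uᵢ + b` with all `aᵢ ≥ 0` and `‖u₀ − w‖∞ ≤ ε/2`. -/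
theorem stmt5 {E : Type*} [AddCommGroup E] [Module ℝ E] [TopologicalSpace E]
    [IsTopologicalAddGroup E] [ContinuousSMul ℝ E]
    {N : ℕ} (hN : 1 ≤ N) {ε : ℝ} (hε : 0 ≤ ε)
    (X : Set E) (hXne : X.Nonempty) (hXconv : Convex ℝ X) (hXcomp : IsCompact X)
    (u₀ : E → ℝ) (u : Fin N → E → ℝ)
    (hu₀c : ContinuousOn u₀ X) (huc : ∀ i, ContinuousOn (u i) X)
    (haff₀ : ∀ x ∈ X, ∀ y ∈ X, ∀ l : ℝ, 0 ≤ l → l ≤ 1 →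
      u₀ (l • x + (1 - l) • y) = l * u₀ x + (1 - l) * u₀ y)
    (haff : ∀ i : Fin N, ∀ x ∈ X, ∀ y ∈ X, ∀ l : ℝ, 0 ≤ l → l ≤ 1 →
      u i (l • x + (1 - l) • y) = l * u i x + (1 - l) * u i y) :
    (∀ x ∈ X, ∀ y ∈ X, (∀ i, u i y ≤ u i x) → u₀ y - ε ≤ u₀ x) ↔
      (∃ (a : Fin N → ℝ) (b : ℝ), (∀ i, 0 ≤ a i) ∧
        ∀ x ∈ X, |u₀ x - ((∑ i, a i * u i x) + b)| ≤ ε / 2) :=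
  stmt5_general X hXne hXconv hXcomp u₀ u hu₀c huc haff₀ haff
end

section
/- Let ε ≥ 0 and let (X, u₀, {u₁,…,u_N}) be a setting with vN-M utilities (no topological assumptions). The following are equivalent: (i) the pair (u₀, {u₁,…,u_N}) satisfies ε-Semistrong Pareto; (ii) there exists a utilitarian aggregator w ∈ W₊ with ‖u₀ − w‖∞ ≤ ε/2. -/
/-!
Semistrong Pareto says that the convex set of points `(u x - u y + d, u₀ x - u₀ y + t)` of
`ℝᴺ × ℝ`, with `x, y ∈ X`, `d ≥ 0` and `t < -ε`, avoids the origin. A functional `(w, β)` that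
is nonpositive on it has `w ≤ 0` and `β ≥ 0`. If `β > 0`, the weights `-w / β` leave a remainder
of oscillation at most `ε` on `X`, and centring it gives the constant of the aggregator. If
`β = 0`, the utilities satisfy the relation `∑ wᵢ uᵢ = const` on `X`: one utility with `wᵢ ≠ 0`
can be eliminated, provided the others with `wᵢ ≠ 0` are now required to be equal rather than
weakly better, and by induction on `N` the aggregator found for the remaining utilities is
corrected by a multiple of the relation until all its weights are nonnegative.
-/
open Set
open scoped Pointwise

theorem nonpos_of_forall_pos_add_mul_nonpos {a b : ℝ} (h : ∀ s > 0, a + s * b ≤ 0) :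
    a ≤ 0 ∧ b ≤ 0 := by
  constructor
  · refine le_of_forall_pos_le_add fun δ hδ => ?_
    have hs : 0 < δ / (|b| + 1) := by positivity
    have hsb : δ / (|b| + 1) * |b| ≤ δ := by
      rw [div_mul_eq_mul_div, div_le_iff₀ (by positivity)]
      nlinarith [abs_nonneg b]
    have := mul_le_mul_of_nonneg_left (neg_le_abs b) hs.le
    linarith [h _ hs]
  · by_contra! hb
    have := h ((|a| + 1) / b) (by positivity)
    rw [div_mul_cancel₀ _ hb.ne'] at this
    linarith [neg_abs_le a]

theorem exists_nonneg_forall_le_mul {ι : Type*} [Finite ι] (f g : ι → ℝ) :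
    ∃ t, 0 ≤ t ∧ ∀ i, 0 < g i → f i ≤ t * g i := by
  obtain ⟨B, hB⟩ := (finite_range fun i => f i / g i).bddAbove
  refine ⟨max B 0, le_max_right B 0, fun i hi => ?_⟩
  calc f i = f i / g i * g i := (div_mul_cancel₀ _ hi.ne').symm
    _ ≤ max B 0 * g i := by gcongr; exact (hB (mem_range_self i)).trans (le_max_left B 0)

theorem exists_abs_sub_le_half_of_forall_le_add {α : Type*} {s : Set α} {g : α → ℝ} {ε : ℝ}
    (h : ∀ x ∈ s, ∀ y ∈ s, g x ≤ g y + ε) : ∃ b, ∀ x ∈ s, |g x - b| ≤ ε / 2 := by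
  rcases s.eq_empty_or_nonempty with rfl | ⟨x₀, hx₀⟩
  · exact ⟨0, by simp⟩
  refine ⟨sSup (g '' s) - ε / 2, fun x hx => abs_le.2 ⟨?_, ?_⟩⟩
  · have : sSup (g '' s) ≤ g x + ε :=
      csSup_le ⟨g x₀, mem_image_of_mem g hx₀⟩ (forall_mem_image.2 fun y hy => h y hy x hx)
    linarith
  · have : g x ≤ sSup (g '' s) :=
      le_csSup ⟨g x₀ + ε, forall_mem_image.2 fun y hy => h y hy x₀ hx₀⟩ (mem_image_of_mem g hx)
    linarith

theorem Convex.exists_dual_ne_zero_forall_nonpos {V : Type*} [NormedAddCommGroup V]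
    [NormedSpace ℝ V] [FiniteDimensional ℝ V] [Nontrivial V] {C : Set V} (hC : Convex ℝ C)
    (h0 : (0 : V) ∉ C) : ∃ f : Module.Dual ℝ V, f ≠ 0 ∧ ∀ c ∈ C, f c ≤ 0 := by
  by_cases hint : (interior C).Nonempty
  · obtain ⟨f, hf, hle⟩ :=
      geometric_hahn_banach_of_nonempty_interior_point hC (fun h => h0 (interior_subset h)) hint
    exact ⟨f, fun h => hf (ContinuousLinearMap.coe_injective h), by simpa using hle⟩
  -- Otherwise `C` lies in a proper affine subspace, on which a nonzero functional is constant.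
  have hspan : vectorSpan ℝ C < ⊤ := by
    rw [lt_top_iff_ne_top, Ne,
      ← AffineSubspace.affineSpan_eq_top_iff_vectorSpan_eq_top_of_nontrivial,
      ← hC.interior_nonempty_iff_affineSpan_eq_top]
    exact hint
  obtain ⟨f, hf, hker⟩ := (vectorSpan ℝ C).exists_le_ker_of_lt_top hspan
  have hconst : ∀ c ∈ C, ∀ c' ∈ C, f c = f c' := fun c hc c' hc' => by
    simpa [sub_eq_zero] using hker (vsub_mem_vectorSpan ℝ hc hc')
  by_cases hnonpos : ∀ c ∈ C, f c ≤ 0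
  · exact ⟨f, hf, hnonpos⟩
  · push Not at hnonpos
    obtain ⟨c₀, hc₀, hpos⟩ := hnonpos
    exact ⟨-f, neg_ne_zero.2 hf, fun c hc => by simp [hconst c hc c₀ hc₀, hpos.le]⟩

theorem Module.Dual.exists_dotProduct_add_mul {ι : Type*} [Fintype ι]
    (f : Module.Dual ℝ ((ι → ℝ) × ℝ)) :
    ∃ (w : ι → ℝ) (β : ℝ), ∀ p, f p = w ⬝ᵥ p.1 + β * p.2 := by
  classical
  refine ⟨(dotProductEquiv ℝ ι).symm (f ∘ₗ LinearMap.inl ℝ _ ℝ), f (0, 1), fun p => ?_⟩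
  have h1 := congrArg (· p.1) ((dotProductEquiv ℝ ι).apply_symm_apply (f ∘ₗ LinearMap.inl ℝ _ ℝ))
  have h2 : f (0, p.2) = p.2 * f (0, 1) := by
    rw [← smul_eq_mul, ← map_smul]
    simp
  simp only [dotProductEquiv_apply_apply, LinearMap.coe_comp, Function.comp_apply,
    LinearMap.inl_apply] at h1
  rw [h1, mul_comm, ← h2, ← map_add, Prod.mk_add_mk, add_zero, zero_add]

theorem Convex.exists_dotProduct_add_mul_nonpos {ι : Type*} [Fintype ι]
    {C : Set ((ι → ℝ) × ℝ)} (hC : Convex ℝ C) (h0 : 0 ∉ C) :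
    ∃ (w : ι → ℝ) (β : ℝ), (w ≠ 0 ∨ β ≠ 0) ∧ ∀ p ∈ C, w ⬝ᵥ p.1 + β * p.2 ≤ 0 := by
  obtain ⟨f, hf, hle⟩ := hC.exists_dual_ne_zero_forall_nonpos h0
  obtain ⟨w, β, hwβ⟩ := f.exists_dotProduct_add_mul
  refine ⟨w, β, ?_, fun p hp => hwβ p ▸ hle p hp⟩
  by_contra! h
  exact hf (LinearMap.ext fun p => by simp [hwβ, h.1, h.2])

section MixtureAffine

variable {E W W' : Type*} [AddCommGroup E] [Module ℝ E] [AddCommGroup W] [Module ℝ W]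
  [AddCommGroup W'] [Module ℝ W'] {X : Set E}

def IsMixtureAffine (X : Set E) (f : E → W) : Prop :=
  ∀ x ∈ X, ∀ y ∈ X, ∀ l : ℝ, 0 ≤ l → l ≤ 1 → f (l • x + (1 - l) • y) = l • f x + (1 - l) • f y

theorem IsMixtureAffine.convex_image {f : E → W} (hf : IsMixtureAffine X f)
    (hX : Convex ℝ X) : Convex ℝ (f '' X) := by
  rintro _ ⟨x, hx, rfl⟩ _ ⟨y, hy, rfl⟩ a b ha hb hab
  obtain rfl : b = 1 - a := eq_sub_of_add_eq' hab
  exact ⟨_, hX hx hy ha hb hab, hf x hx y hy a ha (by linarith)⟩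

theorem IsMixtureAffine.prodMk {f : E → W} {g : E → W'} (hf : IsMixtureAffine X f)
    (hg : IsMixtureAffine X g) : IsMixtureAffine X fun x => (f x, g x) :=
  fun x hx y hy l h₀ h₁ => Prod.ext (hf x hx y hy l h₀ h₁) (hg x hx y hy l h₀ h₁)

theorem IsMixtureAffine.pi {ι : Type*} {f : ι → E → W} (hf : ∀ i, IsMixtureAffine X (f i)) :
    IsMixtureAffine X fun x i => f i x :=
  fun x hx y hy l h₀ h₁ => funext fun i => hf i x hx y hy l h₀ h₁

end MixtureAffine

section Pareto

variable {E ι : Type*} {X : Set E} {ε : ℝ} {u₀ : E → ℝ} {M : Set ι} {v : ι → E → ℝ}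

/-- The indices outside `M` are compared by equality; they arise when a utility is eliminated. -/
def WeaklyDominates (M : Set ι) (v : ι → E → ℝ) (x y : E) : Prop :=
  (∀ i ∈ M, v i y ≤ v i x) ∧ ∀ i ∉ M, v i y = v i x

def SemistrongPareto (X : Set E) (ε : ℝ) (u₀ : E → ℝ) (M : Set ι) (v : ι → E → ℝ) : Prop :=
  ∀ x ∈ X, ∀ y ∈ X, WeaklyDominates M v x y → u₀ y - ε ≤ u₀ x

variable [Fintype ι]

def IsNearUtilitarian (X : Set E) (ε : ℝ) (u₀ : E → ℝ) (M : Set ι) (v : ι → E → ℝ) : Prop :=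
  ∃ (a : ι → ℝ) (b : ℝ), (∀ i ∈ M, 0 ≤ a i) ∧
    ∀ x ∈ X, |u₀ x - ((∑ i, a i * v i x) + b)| ≤ ε / 2

theorem IsNearUtilitarian.semistrongPareto (h : IsNearUtilitarian X ε u₀ M v) :
    SemistrongPareto X ε u₀ M v := by
  obtain ⟨a, b, ha, hab⟩ := h
  rintro x hx y hy ⟨hle, heq⟩
  have hsum : ∑ i, a i * v i y ≤ ∑ i, a i * v i x := Finset.sum_le_sum fun i _ => by
    by_cases hi : i ∈ M
    · exact mul_le_mul_of_nonneg_left (hle i hi) (ha i hi)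
    · rw [heq i hi]
  linarith [(abs_le.1 (hab x hx)).1, (abs_le.1 (hab y hy)).2]

theorem isNearUtilitarian_of_forall_le {w : ι → ℝ} {β : ℝ} (hβ : 0 < β)
    (hw : ∀ i ∈ M, w i ≤ 0)
    (h : ∀ x ∈ X, ∀ y ∈ X, ∑ i, w i * v i x - ∑ i, w i * v i y + β * (u₀ x - u₀ y - ε) ≤ 0) :
    IsNearUtilitarian X ε u₀ M v := by
  obtain ⟨b, hb⟩ := exists_abs_sub_le_half_of_forall_le_add
    (s := X) (g := fun x => u₀ x + (∑ i, w i * v i x) / β) fun x hx y hy => by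
      have key : u₀ x + (∑ i, w i * v i x) / β - (u₀ y + (∑ i, w i * v i y) / β + ε) =
          (∑ i, w i * v i x - ∑ i, w i * v i y + β * (u₀ x - u₀ y - ε)) / β := by
        field_simp
        ring
      rw [← sub_nonpos, key]
      exact div_nonpos_of_nonpos_of_nonneg (h x hx y hy) hβ.le
  refine ⟨fun i => -w i / β, b, fun i hi => div_nonneg (neg_nonneg.2 (hw i hi)) hβ.le,
    fun x hx => ?_⟩
  convert hb x hx using 2
  simp only [neg_div, neg_mul, Finset.sum_neg_distrib, div_mul_eq_mul_div, ← Finset.sum_div]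
  ring

variable [AddCommGroup E] [Module ℝ E]

theorem SemistrongPareto.exists_separating_weights (hP : SemistrongPareto X ε u₀ M v)
    (hX : Convex ℝ X) (hu₀ : IsMixtureAffine X u₀) (hv : ∀ i, IsMixtureAffine X (v i)) :
    ∃ (w : ι → ℝ) (β : ℝ), (w ≠ 0 ∨ β ≠ 0) ∧ ∀ x ∈ X, ∀ y ∈ X, ∀ d : ι → ℝ,
      (∀ i ∈ M, 0 ≤ d i) → (∀ i ∉ M, d i = 0) → ∀ t < -ε,
        ∑ i, w i * v i x - ∑ i, w i * v i y + ∑ i, w i * d i + β * (u₀ x - u₀ y + t) ≤ 0 := by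
  set F : E → (ι → ℝ) × ℝ := fun x => (fun i => v i x, u₀ x)
  set D : Set (ι → ℝ) := {d | (∀ i ∈ M, 0 ≤ d i) ∧ ∀ i ∉ M, d i = 0}
  have hD : Convex ℝ D := by
    rintro d ⟨hd, hd'⟩ e ⟨he, he'⟩ a b ha hb -
    refine ⟨fun i hi => ?_, fun i hi => by simp [hd' i hi, he' i hi]⟩
    simpa using add_nonneg (mul_nonneg ha (hd i hi)) (mul_nonneg hb (he i hi))
  have hF : Convex ℝ (F '' X) := ((IsMixtureAffine.pi hv).prodMk hu₀).convex_image hX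
  have hC : Convex ℝ (F '' X - F '' X + D ×ˢ Iio (-ε)) :=
    (hF.sub hF).add (hD.prod (convex_Iio _))
  -- `0` in this set would mean that `y` weakly dominates `x` while `u₀ y < u₀ x - ε`.
  have h0 : (0 : (ι → ℝ) × ℝ) ∉ F '' X - F '' X + D ×ˢ Iio (-ε) := by
    rintro ⟨_, ⟨_, ⟨x, hx, rfl⟩, _, ⟨y, hy, rfl⟩, rfl⟩, ⟨d, t⟩, ⟨⟨hd, hd'⟩, ht⟩, h⟩
    simp only [Prod.ext_iff, funext_iff, F, Prod.fst_add, Prod.snd_add, Prod.fst_sub,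
      Prod.snd_sub, Pi.add_apply, Pi.sub_apply, Prod.fst_zero, Prod.snd_zero,
      Pi.zero_apply] at h
    have := hP y hy x hx ⟨fun i hi => by linarith [hd i hi, h.1 i],
      fun i hi => by linarith [hd' i hi, h.1 i]⟩
    simp only [mem_Iio] at ht
    linarith [h.2]
  obtain ⟨w, β, hne, hle⟩ := hC.exists_dotProduct_add_mul_nonpos h0
  refine ⟨w, β, hne, fun x hx y hy d hd hd' t ht => ?_⟩
  have := hle _ (Set.add_mem_add (Set.sub_mem_sub ⟨x, hx, rfl⟩ ⟨y, hy, rfl⟩)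
    (Set.mk_mem_prod (show d ∈ D from ⟨hd, hd'⟩) ht))
  simpa [F, dotProduct, mul_add, mul_sub, Finset.sum_add_distrib, Finset.sum_sub_distrib]
    using this

theorem SemistrongPareto.isNearUtilitarian_or_exists_relation
    (hP : SemistrongPareto X ε u₀ M v) (hXne : X.Nonempty) (hX : Convex ℝ X)
    (hu₀ : IsMixtureAffine X u₀) (hv : ∀ i, IsMixtureAffine X (v i)) :
    IsNearUtilitarian X ε u₀ M v ∨
      ∃ w : ι → ℝ, w ≠ 0 ∧ (∀ i ∈ M, w i ≤ 0) ∧ ∃ K, ∀ x ∈ X, ∑ i, w i * v i x = K := by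
  classical
  obtain ⟨w, β, hne, hsep⟩ := hP.exists_separating_weights hX hu₀ hv
  obtain ⟨x₀, hx₀⟩ := hXne
  have ht₀ : -|ε| - 1 < -ε := by linarith [le_abs_self ε]
  have hβ : 0 ≤ β := by
    have := hsep x₀ hx₀ x₀ hx₀ 0 (fun _ _ => le_rfl) (fun _ _ => rfl) _ ht₀
    simp only [sub_self, Pi.zero_apply, mul_zero, Finset.sum_const_zero, zero_add] at this
    nlinarith [abs_nonneg ε]
  have hw : ∀ i ∈ M, w i ≤ 0 := fun i hi =>
    (nonpos_of_forall_pos_add_mul_nonpos (a := β * (-|ε| - 1)) fun s hs => by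
      have := hsep x₀ hx₀ x₀ hx₀ (Pi.single i s)
        (fun k _ => by by_cases hk : k = i <;> simp [hk, hs.le])
        (fun k hk => by simp [(ne_of_mem_of_not_mem hi hk).symm]) _ ht₀
      simp only [sub_self, zero_add, Pi.single_apply, mul_ite, mul_zero, Finset.sum_ite_eq',
        Finset.mem_univ, if_true] at this
      linarith).2
  have hkey : ∀ x ∈ X, ∀ y ∈ X,
      ∑ i, w i * v i x - ∑ i, w i * v i y + β * (u₀ x - u₀ y - ε) ≤ 0 :=
    fun x hx y hy => (nonpos_of_forall_pos_add_mul_nonpos (b := -β) fun s hs => by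
      have := hsep x hx y hy 0 (fun _ _ => le_rfl) (fun _ _ => rfl) (-ε - s) (by linarith)
      simp only [Pi.zero_apply, mul_zero, Finset.sum_const_zero, add_zero] at this
      linarith).1
  rcases hβ.lt_or_eq with hβ | rfl
  · exact .inl (isNearUtilitarian_of_forall_le hβ hw hkey)
  · refine .inr ⟨w, hne.resolve_right (not_not.2 rfl), hw, ∑ i, w i * v i x₀,
      fun x hx => le_antisymm ?_ ?_⟩
    · linarith [hkey x hx x₀ hx₀]
    · linarith [hkey x₀ hx₀ x hx]

end Pareto

section Elimination

variable {E : Type*} {X : Set E} {ε : ℝ} {u₀ : E → ℝ} {n : ℕ} {M : Set (Fin (n + 1))}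
  {v : Fin (n + 1) → E → ℝ} {w : Fin (n + 1) → ℝ} {K : ℝ} {j : Fin (n + 1)}

theorem SemistrongPareto.succAbove (hP : SemistrongPareto X ε u₀ M v)
    (hK : ∀ x ∈ X, ∑ i, w i * v i x = K) (hj : w j ≠ 0) :
    SemistrongPareto X ε u₀ {i | j.succAbove i ∈ M ∧ w (j.succAbove i) = 0}
      fun i => v (j.succAbove i) := by
  rintro x hx y hy ⟨hle, heq⟩
  have hterm : ∀ i, w (j.succAbove i) * v (j.succAbove i) y =
      w (j.succAbove i) * v (j.succAbove i) x := fun i => by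
    by_cases hi : j.succAbove i ∈ M ∧ w (j.succAbove i) = 0
    · rw [hi.2, zero_mul, zero_mul]
    · exact congrArg (w (j.succAbove i) * ·) (heq i hi)
  have hj' : v j y = v j x := by
    have h := (hK y hy).trans (hK x hx).symm
    rw [Fin.sum_univ_succAbove _ j, Fin.sum_univ_succAbove _ j,
      Finset.sum_congr rfl fun i _ => hterm i] at h
    exact mul_left_cancel₀ hj (add_right_cancel h)
  refine hP x hx y hy ⟨fun k hk => ?_, fun k hk => ?_⟩
  · rcases Fin.eq_self_or_eq_succAbove j k with rfl | ⟨i, rfl⟩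
    · exact hj'.le
    · by_cases hi : w (j.succAbove i) = 0
      · exact hle i ⟨hk, hi⟩
      · exact (heq i fun h => hi h.2).le
  · rcases Fin.eq_self_or_eq_succAbove j k with rfl | ⟨i, rfl⟩
    · exact hj'
    · exact heq i fun h => hk h.1

theorem IsNearUtilitarian.of_succAbove (hw : ∀ i ∈ M, w i ≤ 0)
    (hK : ∀ x ∈ X, ∑ i, w i * v i x = K)
    (h : IsNearUtilitarian X ε u₀ {i | j.succAbove i ∈ M ∧ w (j.succAbove i) = 0}
      fun i => v (j.succAbove i)) :
    IsNearUtilitarian X ε u₀ M v := by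
  obtain ⟨a, b, ha, hab⟩ := h
  set A : Fin (n + 1) → ℝ := Fin.insertNth j 0 a
  -- Subtracting `t` times the relation `∑ i, w i * v i = K` shifts the aggregator by a constant
  -- and raises the weights with `w i < 0`; a large `t` makes them nonnegative.
  obtain ⟨t, ht, hAt⟩ := exists_nonneg_forall_le_mul (fun i => -A i) (fun i => -w i)
  refine ⟨fun i => A i - t * w i, b + t * K, fun k hk => ?_, fun x hx => ?_⟩
  · rcases (hw k hk).lt_or_eq with hneg | hzero
    · linarith [hAt k (neg_pos.2 hneg)]
    · rcases Fin.eq_self_or_eq_succAbove j k with rfl | ⟨i, rfl⟩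
      · simp [A, hzero]
      · simp [A, hzero, ha i ⟨hk, hzero⟩]
  · have hsum : ∑ k, (A k - t * w k) * v k x + (b + t * K) =
        ∑ i, a i * v (j.succAbove i) x + b := by
      simp only [sub_mul, Finset.sum_sub_distrib, mul_assoc, ← Finset.mul_sum, hK x hx]
      rw [Fin.sum_univ_succAbove _ j]
      simp only [A, Fin.insertNth_apply_same, Fin.insertNth_apply_succAbove, zero_mul, zero_add]
      ring
    rw [hsum]
    exact hab x hx

end Elimination

section Main

variable {E : Type*} [AddCommGroup E] [Module ℝ E] {X : Set E} {ε : ℝ} {u₀ : E → ℝ}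

theorem SemistrongPareto.isNearUtilitarian {n : ℕ} {M : Set (Fin n)} {v : Fin n → E → ℝ}
    (hP : SemistrongPareto X ε u₀ M v) (hXne : X.Nonempty) (hX : Convex ℝ X)
    (hu₀ : IsMixtureAffine X u₀) (hv : ∀ i, IsMixtureAffine X (v i)) :
    IsNearUtilitarian X ε u₀ M v := by
  induction n with
  | zero =>
    rcases hP.isNearUtilitarian_or_exists_relation hXne hX hu₀ hv with h | ⟨w, hw, -⟩
    · exact h
    · exact absurd (Subsingleton.elim w 0) hw
  | succ n ih =>
    rcases hP.isNearUtilitarian_or_exists_relation hXne hX hu₀ hv with h | ⟨w, hw0, hw, K, hK⟩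
    · exact h
    obtain ⟨j, hj⟩ := Function.ne_iff.1 hw0
    exact .of_succAbove hw hK (ih (hP.succAbove hK hj) fun i => hv _)

theorem semistrongPareto_iff_isNearUtilitarian {n : ℕ} {M : Set (Fin n)} {v : Fin n → E → ℝ}
    (hXne : X.Nonempty) (hX : Convex ℝ X) (hu₀ : IsMixtureAffine X u₀)
    (hv : ∀ i, IsMixtureAffine X (v i)) :
    SemistrongPareto X ε u₀ M v ↔ IsNearUtilitarian X ε u₀ M v :=
  ⟨fun h => h.isNearUtilitarian hXne hX hu₀ hv, IsNearUtilitarian.semistrongPareto⟩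

end Main

theorem stmt6_general {E : Type*} [AddCommGroup E] [Module ℝ E]
    {N : ℕ} {ε : ℝ}
    (X : Set E) (hXne : X.Nonempty) (hXconv : Convex ℝ X)
    (u₀ : E → ℝ) (u : Fin N → E → ℝ)
    (haff₀ : ∀ x ∈ X, ∀ y ∈ X, ∀ l : ℝ, 0 ≤ l → l ≤ 1 →
      u₀ (l • x + (1 - l) • y) = l * u₀ x + (1 - l) * u₀ y)
    (haff : ∀ i : Fin N, ∀ x ∈ X, ∀ y ∈ X, ∀ l : ℝ, 0 ≤ l → l ≤ 1 →
      u i (l • x + (1 - l) • y) = l * u i x + (1 - l) * u i y) :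
    (∀ x ∈ X, ∀ y ∈ X, (∀ i, u i y ≤ u i x) → u₀ y - ε ≤ u₀ x) ↔
      (∃ (a : Fin N → ℝ) (b : ℝ), (∀ i, 0 ≤ a i) ∧
        ∀ x ∈ X, |u₀ x - ((∑ i, a i * u i x) + b)| ≤ ε / 2) := by
  simpa [SemistrongPareto, IsNearUtilitarian, WeaklyDominates] using
    semistrongPareto_iff_isNearUtilitarian (M := Set.univ) hXne hXconv haff₀ haff

/-- Theorem: aggregation with `ε`-Semistrong Pareto, general case.
Let `ε ≥ 0` and let `(X, u₀, {u₁,…,u_N})` be a setting with vN-M utilities (no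
topological assumptions).  Then `ε`-Semistrong Pareto holds iff there is a utilitarian
aggregator `w = Σᵢ aᵢ uᵢ + b` with all `aᵢ ≥ 0` and `‖u₀ − w‖∞ ≤ ε/2`. -/
theorem stmt6 {E : Type*} [AddCommGroup E] [Module ℝ E]
    {N : ℕ} (hN : 1 ≤ N) {ε : ℝ} (hε : 0 ≤ ε)
    (X : Set E) (hXne : X.Nonempty) (hXconv : Convex ℝ X)
    (u₀ : E → ℝ) (u : Fin N → E → ℝ)
    (haff₀ : ∀ x ∈ X, ∀ y ∈ X, ∀ l : ℝ, 0 ≤ l → l ≤ 1 →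
      u₀ (l • x + (1 - l) • y) = l * u₀ x + (1 - l) * u₀ y)
    (haff : ∀ i : Fin N, ∀ x ∈ X, ∀ y ∈ X, ∀ l : ℝ, 0 ≤ l → l ≤ 1 →
      u i (l • x + (1 - l) • y) = l * u i x + (1 - l) * u i y) :
    (∀ x ∈ X, ∀ y ∈ X, (∀ i, u i y ≤ u i x) → u₀ y - ε ≤ u₀ x) ↔
      (∃ (a : Fin N → ℝ) (b : ℝ), (∀ i, 0 ≤ a i) ∧
        ∀ x ∈ X, |u₀ x - ((∑ i, a i * u i x) + b)| ≤ ε / 2) :=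
  stmt6_general X hXne hXconv u₀ u haff₀ haff
end

section
/- Let ε ≥ 0 and let (X, u₀, {u₁,…,u_N}) be a setting with vN-M utilities satisfying Sequential ε-Strong Pareto. Then for each fixed i ∈ {1,…,N} there exist a real number a₀ ≥ 0 and real numbers a_j ≥ 0 for j ∈ {1,…,N} \ {i} such that for all x, y ∈ X: a₀(u₀(y) − u₀(x)) + Σ_{j≠i} a_j (u_j(x) − u_j(y)) + (u_i(x) − u_i(y)) ≤ a₀ ε. -/
/-!
Put `g(x, y) = (u₀ y - u₀ x - ε, (u_j x - u_j y)_j)`. The vectors that agree with some `g(x, y)` in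
coordinate `i` and lie below it elsewhere form a convex set (`dominatedSet`), because the utilities
are affine and `X` is convex. A sequence in the cone over this set tending to the unit vector `e_i`
would produce exactly the sequences that part (b) of Sequential `ε`-Strong Pareto forbids, so `e_i`
lies outside the closure of that cone. Separating it by a linear functional yields weights `λ ≥ 0`
with `λ_i > 0` and `⟪λ, g(x, y)⟫ ≤ 0` for all `x, y ∈ X`; dividing by `λ_i` gives the coefficients.
-/

open Filter Topology

/-- Sequential `ε`-Strong Pareto for the pair `(u₀, {u₁,…,u_N})` on `X`:
(a) there are no `x, y ∈ X` with `u₀(x) < u₀(y) − ε` and `uᵢ(x) ≥ uᵢ(y)` for all `i`;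
(b) there are no sequences `(x_n), (y_n)` in `X` and index `i` with
`uᵢ(x_n) > uᵢ(y_n)` for all `n`,
`liminf (u_j(x_n) − u_j(y_n))/(uᵢ(x_n) − uᵢ(y_n)) ≥ 0` for all `j ≠ i`, and
`liminf (u₀(y_n) − u₀(x_n) − ε)/(uᵢ(x_n) − uᵢ(y_n)) ≥ 0`
(limits inferior taken in the extended reals). -/
def SequentialStrongPareto {E : Type*} {N : ℕ} (X : Set E) (ε : ℝ)
    (u₀ : E → ℝ) (u : Fin N → E → ℝ) : Prop :=
  (¬ ∃ x ∈ X, ∃ y ∈ X, u₀ x < u₀ y - ε ∧ ∀ i, u i y ≤ u i x) ∧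
  (¬ ∃ (xs ys : ℕ → E) (i : Fin N), (∀ n, xs n ∈ X) ∧ (∀ n, ys n ∈ X) ∧
      (∀ n, u i (ys n) < u i (xs n)) ∧
      (∀ j, j ≠ i → (0 : EReal) ≤ Filter.liminf
        (fun n => (((u j (xs n) - u j (ys n)) / (u i (xs n) - u i (ys n)) : ℝ) : EReal))
        Filter.atTop) ∧
      (0 : EReal) ≤ Filter.liminf
        (fun n => (((u₀ (ys n) - u₀ (xs n) - ε) / (u i (xs n) - u i (ys n)) : ℝ) : EReal))
        Filter.atTop)

theorem exists_strongDual_nonpos_of_notMem_closure_hull {V : Type*} [TopologicalSpace V]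
    [AddCommGroup V] [IsTopologicalAddGroup V] [Module ℝ V] [ContinuousSMul ℝ V]
    [LocallyConvexSpace ℝ V] {A : Set V} (hA : A.Nonempty) {v : V}
    (hv : v ∉ closure (ConvexCone.hull ℝ A : Set V)) :
    ∃ f : StrongDual ℝ V, (∀ a ∈ A, f a ≤ 0) ∧ 0 < f v := by
  rw [← ConvexCone.coe_closure] at hv
  have hAK : A ⊆ (ConvexCone.hull ℝ A).closure := by
    rw [ConvexCone.coe_closure]
    exact ConvexCone.subset_hull.trans subset_closure
  lift (ConvexCone.hull ℝ A).closure to ProperCone ℝ V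
    using ⟨hA.mono hAK, by rw [ConvexCone.coe_closure]; exact isClosed_closure⟩ with C
  obtain ⟨f, hfC, hfv⟩ := C.hyperplane_separation_point hv
  exact ⟨-f, fun a ha => by simpa using hfC a (hAK ha), by simpa using hfv⟩

theorem StrongDual.apply_eq_sum_mul_single {κ : Type*} [Fintype κ] [DecidableEq κ]
    (f : StrongDual ℝ (κ → ℝ)) (c : κ → ℝ) : f c = ∑ k, f (Pi.single k 1) * c k := by
  conv_lhs => rw [← Finset.univ_sum_single c]
  rw [map_sum]
  refine Finset.sum_congr rfl fun k _ => ?_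
  rw [mul_comm, ← smul_eq_mul, ← map_smul, ← Pi.single_smul, smul_eq_mul, mul_one]

theorem zero_le_liminf_div_of_tendsto {ι : Type*} {l : Filter ι} {a b c r : ι → ℝ}
    (hr : ∀ n, 0 < r n) (ha : Tendsto (fun n => r n * a n) l (𝓝 1))
    (hc : Tendsto c l (𝓝 0)) (hcb : ∀ n, c n ≤ r n * b n) :
    (0 : EReal) ≤ liminf (fun n => ((b n / a n : ℝ) : EReal)) l := by
  have hlim : Tendsto (fun n => ((c n / (r n * a n) : ℝ) : EReal)) l (𝓝 0) := by
    have hdiv : Tendsto (fun n => c n / (r n * a n)) l (𝓝 0) := by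
      simpa [Pi.div_def] using hc.div ha one_ne_zero
    exact (continuous_coe_real_ereal.tendsto 0).comp hdiv
  rcases l.eq_or_neBot with rfl | hl
  · simp
  rw [← hlim.liminf_eq]
  refine liminf_le_liminf ?_
  filter_upwards [ha.eventually_const_lt one_pos] with n hn
  rw [EReal.coe_le_coe_iff, ← mul_div_mul_left (b n) (a n) (hr n).ne']
  exact div_le_div_of_nonneg_right (hcb n) hn.le

section Dominated

variable {α κ : Type*}

def dominatedSet (g : α → κ → ℝ) (S : Set α) (i : κ) : Set (κ → ℝ) :=
  {c | ∃ p ∈ S, c i = g p i ∧ ∀ k ≠ i, c k ≤ g p k}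

variable {g : α → κ → ℝ} {S : Set α} {i : κ}

theorem apply_mem_dominatedSet {p : α} (hp : p ∈ S) : g p ∈ dominatedSet g S i :=
  ⟨p, hp, rfl, fun _ _ => le_rfl⟩

theorem sub_smul_single_mem_dominatedSet [DecidableEq κ] {p : α} (hp : p ∈ S) {s : ℝ}
    (hs : 0 ≤ s) {k : κ} (hk : k ≠ i) : g p - s • Pi.single k 1 ∈ dominatedSet g S i :=
  ⟨p, hp, by simp [Ne.symm hk], fun j _ => by by_cases hjk : j = k <;> simp [hjk, hs]⟩

theorem convex_dominatedSet [AddCommGroup α] [Module ℝ α] (hS : Convex ℝ S)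
    (hg : ∀ p ∈ S, ∀ q ∈ S, ∀ l : ℝ, 0 ≤ l → l ≤ 1 →
      g (l • p + (1 - l) • q) = l • g p + (1 - l) • g q) (i : κ) :
    Convex ℝ (dominatedSet g S i) := by
  rintro c ⟨p, hp, hci, hc⟩ d ⟨q, hq, hdi, hd⟩ l m hl hm hlm
  obtain rfl : m = 1 - l := by linarith
  refine ⟨l • p + (1 - l) • q, hS hp hq hl hm hlm, ?_, fun k hk => ?_⟩ <;>
    simp only [hg p hp q hq l hl (by linarith), Pi.add_apply, Pi.smul_apply, smul_eq_mul]
  · rw [hci, hdi]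
  · gcongr
    exacts [hc k hk, hd k hk]

theorem exists_seq_of_single_mem_closure_hull [AddCommGroup α] [Module ℝ α] [Finite κ]
    [DecidableEq κ] (hS : Convex ℝ S)
    (hg : ∀ p ∈ S, ∀ q ∈ S, ∀ l : ℝ, 0 ≤ l → l ≤ 1 →
      g (l • p + (1 - l) • q) = l • g p + (1 - l) • g q)
    (h : Pi.single i 1 ∈ closure (ConvexCone.hull ℝ (dominatedSet g S i) : Set (κ → ℝ))) :
    ∃ p : ℕ → α, (∀ n, p n ∈ S) ∧ (∀ᶠ n in atTop, 0 < g (p n) i) ∧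
      ∀ k ≠ i, (0 : EReal) ≤ liminf (fun n => ((g (p n) k / g (p n) i : ℝ) : EReal)) atTop := by
  rw [ConvexCone.coe_hull_of_convex (convex_dominatedSet hS hg i), mem_closure_iff_seq_limit]
    at h
  obtain ⟨c, hc, hlim⟩ := h
  choose r hr d hd hdc using hc
  choose p hp hpi hpk using hd
  have hci : Tendsto (fun n => r n * g (p n) i) atTop (𝓝 1) := by
    simpa [← hdc, hpi] using tendsto_pi_nhds.1 hlim i
  refine ⟨p, hp, ?_, fun k hk => zero_le_liminf_div_of_tendsto hr hci
    (by simpa [hk] using tendsto_pi_nhds.1 hlim k) fun n => ?_⟩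
  · filter_upwards [hci.eventually_const_lt one_pos] with n hn
    exact pos_of_mul_pos_right hn (hr n).le
  · rw [← hdc]
    exact mul_le_mul_of_nonneg_left (hpk n k hk) (hr n).le

theorem exists_weights_of_single_notMem_closure_hull [Fintype κ] [DecidableEq κ]
    (hS : S.Nonempty)
    (h : Pi.single i 1 ∉ closure (ConvexCone.hull ℝ (dominatedSet g S i) : Set (κ → ℝ))) :
    ∃ w : κ → ℝ, (∀ k, 0 ≤ w k) ∧ 0 < w i ∧ ∀ p ∈ S, ∑ k, w k * g p k ≤ 0 := by
  obtain ⟨p₀, hp₀⟩ := hS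
  obtain ⟨f, hf, hfi⟩ := exists_strongDual_nonpos_of_notMem_closure_hull
    ⟨_, apply_mem_dominatedSet hp₀⟩ h
  refine ⟨fun k => f (Pi.single k 1), fun k => ?_, hfi, fun p hp => ?_⟩
  · rcases eq_or_ne k i with rfl | hk
    · exact hfi.le
    by_contra! hfk
    have hp₀' := hf _ (apply_mem_dominatedSet (i := i) hp₀)
    have := hf _ (sub_smul_single_mem_dominatedSet hp₀
      (add_nonneg (div_nonneg_of_nonpos hp₀' hfk.le) zero_le_one) hk)
    rw [map_sub, map_smul, smul_eq_mul, add_mul, div_mul_cancel₀ _ hfk.ne] at this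
    linarith
  · rw [← StrongDual.apply_eq_sum_mul_single]
    exact hf _ (apply_mem_dominatedSet hp)

end Dominated

section Pareto

variable {E ι : Type*}

/-- Coordinate `none` stands for the index `0` of `u₀`. -/
def paretoGain (ε : ℝ) (u₀ : E → ℝ) (u : ι → E → ℝ) (z : E × E) : Option ι → ℝ
  | none => u₀ z.2 - u₀ z.1 - ε
  | some j => u j z.1 - u j z.2

variable [AddCommGroup E] [Module ℝ E] {X : Set E} {ε : ℝ} {u₀ : E → ℝ} {u : ι → E → ℝ}

theorem paretoGain_mix
    (haff₀ : ∀ x ∈ X, ∀ y ∈ X, ∀ l : ℝ, 0 ≤ l → l ≤ 1 →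
      u₀ (l • x + (1 - l) • y) = l * u₀ x + (1 - l) * u₀ y)
    (haff : ∀ i, ∀ x ∈ X, ∀ y ∈ X, ∀ l : ℝ, 0 ≤ l → l ≤ 1 →
      u i (l • x + (1 - l) • y) = l * u i x + (1 - l) * u i y) :
    ∀ p ∈ X ×ˢ X, ∀ q ∈ X ×ˢ X, ∀ l : ℝ, 0 ≤ l → l ≤ 1 →
      paretoGain ε u₀ u (l • p + (1 - l) • q) =
        l • paretoGain ε u₀ u p + (1 - l) • paretoGain ε u₀ u q := by
  rintro ⟨x₁, y₁⟩ ⟨hx₁, hy₁⟩ ⟨x₂, y₂⟩ ⟨hx₂, hy₂⟩ l hl₀ hl₁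
  funext k
  cases k with
  | none =>
    simp only [paretoGain, Prod.fst_add, Prod.snd_add, Prod.smul_fst, Prod.smul_snd,
      haff₀ _ hx₁ _ hx₂ l hl₀ hl₁, haff₀ _ hy₁ _ hy₂ l hl₀ hl₁, Pi.add_apply, Pi.smul_apply,
      smul_eq_mul]
    ring
  | some j =>
    simp only [paretoGain, Prod.fst_add, Prod.snd_add, Prod.smul_fst, Prod.smul_snd,
      haff j _ hx₁ _ hx₂ l hl₀ hl₁, haff j _ hy₁ _ hy₂ l hl₀ hl₁, Pi.add_apply, Pi.smul_apply,
      smul_eq_mul]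
    ring

theorem SequentialStrongPareto.single_notMem_closure_hull {N : ℕ} {u : Fin N → E → ℝ}
    (hP : SequentialStrongPareto X ε u₀ u) (hX : Convex ℝ X)
    (haff₀ : ∀ x ∈ X, ∀ y ∈ X, ∀ l : ℝ, 0 ≤ l → l ≤ 1 →
      u₀ (l • x + (1 - l) • y) = l * u₀ x + (1 - l) * u₀ y)
    (haff : ∀ i, ∀ x ∈ X, ∀ y ∈ X, ∀ l : ℝ, 0 ≤ l → l ≤ 1 →
      u i (l • x + (1 - l) • y) = l * u i x + (1 - l) * u i y) (i : Fin N) :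
    Pi.single (some i) 1 ∉ closure (ConvexCone.hull ℝ
      (dominatedSet (paretoGain ε u₀ u) (X ×ˢ X) (some i)) : Set (Option (Fin N) → ℝ)) := by
  intro h
  obtain ⟨p, hp, hpos, hlim⟩ :=
    exists_seq_of_single_mem_closure_hull (hX.prod hX) (paretoGain_mix haff₀ haff) h
  obtain ⟨n₀, hn₀⟩ := eventually_atTop.1 hpos
  refine hP.2 ⟨fun n => (p (n + n₀)).1, fun n => (p (n + n₀)).2, i, fun n => (hp _).1,
    fun n => (hp _).2, fun n => sub_pos.1 (hn₀ _ (Nat.le_add_left _ _)), fun j hj => ?_, ?_⟩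
  · exact (hlim (some j) (by simpa using hj)).trans_eq (liminf_nat_add _ n₀).symm
  · exact (hlim none (by simp)).trans_eq (liminf_nat_add _ n₀).symm

end Pareto

theorem stmt10_general {E : Type*} [AddCommGroup E] [Module ℝ E]
    {N : ℕ} {ε : ℝ}
    (X : Set E) (hXne : X.Nonempty) (hXconv : Convex ℝ X)
    (u₀ : E → ℝ) (u : Fin N → E → ℝ)
    (haff₀ : ∀ x ∈ X, ∀ y ∈ X, ∀ l : ℝ, 0 ≤ l → l ≤ 1 →
      u₀ (l • x + (1 - l) • y) = l * u₀ x + (1 - l) * u₀ y)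
    (haff : ∀ i : Fin N, ∀ x ∈ X, ∀ y ∈ X, ∀ l : ℝ, 0 ≤ l → l ≤ 1 →
      u i (l • x + (1 - l) • y) = l * u i x + (1 - l) * u i y)
    (hPareto : SequentialStrongPareto X ε u₀ u) :
    ∀ i : Fin N, ∃ (a₀ : ℝ) (a : Fin N → ℝ), 0 ≤ a₀ ∧ (∀ j, 0 ≤ a j) ∧
      ∀ x ∈ X, ∀ y ∈ X,
        a₀ * (u₀ y - u₀ x) + (∑ j ∈ Finset.univ.erase i, a j * (u j x - u j y)) +
            (u i x - u i y) ≤ a₀ * ε := by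
  intro i
  obtain ⟨w, hw, hwi, hsum⟩ := exists_weights_of_single_notMem_closure_hull
    (hXne.prod hXne) (hPareto.single_notMem_closure_hull hXconv haff₀ haff i)
  refine ⟨w none / w (some i), fun j => w (some j) / w (some i), div_nonneg (hw _) hwi.le,
    fun j => div_nonneg (hw _) hwi.le, fun x hx y hy => ?_⟩
  have key := hsum (x, y) ⟨hx, hy⟩
  rw [Fintype.sum_option, ← Finset.add_sum_erase _ _ (Finset.mem_univ i)] at key
  simp_rw [div_mul_eq_mul_div, ← Finset.sum_div]
  rw [← sub_nonpos]
  calc _ = (w none * (u₀ y - u₀ x - ε) + (w (some i) * (u i x - u i y) +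
          ∑ j ∈ Finset.univ.erase i, w (some j) * (u j x - u j y))) / w (some i) := by
        field_simp
        ring
    _ ≤ 0 := div_nonpos_of_nonpos_of_nonneg key hwi.le

/-- Let `ε ≥ 0` and let `(X, u₀, {u₁,…,u_N})` be a setting with vN-M
utilities satisfying Sequential `ε`-Strong Pareto.  Then for each fixed `i` there exist
`a₀ ≥ 0` and `a_j ≥ 0` for `j ≠ i` such that for all `x, y ∈ X`:
`a₀(u₀(y) − u₀(x)) + Σ_{j≠i} a_j (u_j(x) − u_j(y)) + (uᵢ(x) − uᵢ(y)) ≤ a₀ ε`. -/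
theorem stmt10 {E : Type*} [AddCommGroup E] [Module ℝ E]
    {N : ℕ} (hN : 1 ≤ N) {ε : ℝ} (hε : 0 ≤ ε)
    (X : Set E) (hXne : X.Nonempty) (hXconv : Convex ℝ X)
    (u₀ : E → ℝ) (u : Fin N → E → ℝ)
    (haff₀ : ∀ x ∈ X, ∀ y ∈ X, ∀ l : ℝ, 0 ≤ l → l ≤ 1 →
      u₀ (l • x + (1 - l) • y) = l * u₀ x + (1 - l) * u₀ y)
    (haff : ∀ i : Fin N, ∀ x ∈ X, ∀ y ∈ X, ∀ l : ℝ, 0 ≤ l → l ≤ 1 →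
      u i (l • x + (1 - l) • y) = l * u i x + (1 - l) * u i y)
    (hPareto : SequentialStrongPareto X ε u₀ u) :
    ∀ i : Fin N, ∃ (a₀ : ℝ) (a : Fin N → ℝ), 0 ≤ a₀ ∧ (∀ j, 0 ≤ a j) ∧
      ∀ x ∈ X, ∀ y ∈ X,
        a₀ * (u₀ y - u₀ x) + (∑ j ∈ Finset.univ.erase i, a j * (u j x - u j y)) +
            (u i x - u i y) ≤ a₀ * ε :=
  stmt10_general X hXne hXconv u₀ u haff₀ haff hPareto
end

section
/- Let ε ≥ 0 and let (X, u₀, {u₁,…,u_N}) be a setting with vN-M utilities in which X is the convex hull of finitely many points of the ambient real vector space. The following are equivalent: (i) the pair (u₀, {u₁,…,u_N}) satisfies ε-Strong Pareto; (ii) there exists a utilitarian aggregator w ∈ W₊₊ with ‖u₀ − w‖∞ ≤ ε/2. -/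
/-!
For weights `a`, the function `u₀ - ∑ aᵢ uᵢ` is affine, so its oscillation over `X = conv T` is
the largest of the finitely many numbers `u₀ s - u₀ t - ∑ aᵢ (uᵢ s - uᵢ t)` with `s, t ∈ T`, and
any `a` making all of them at most `ε` gives an aggregator within `ε / 2` of `u₀`. Finding
strictly positive such weights is a linear feasibility problem. If it had no solution, Motzkin's
transposition theorem (Farkas' lemma after homogenization; Farkas by Fourier–Motzkin elimination)
would give nonnegative multipliers on the pairs `(s, t)`. Normalised, they are a pair of lotteries
`x, y ∈ X` such that `y` Pareto-dominates `x` while `u₀ x - u₀ y ≥ ε`, with strict dominance when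
equality holds, contradicting `ε`-Strong Pareto. Conversely, an aggregator with positive weights
is strictly monotone in the Pareto order.
-/

open Matrix

theorem Finset.exists_between_of_forall_le {α : Type*} [LinearOrder α] [Nonempty α]
    {s t : Finset α} (h : ∀ a ∈ s, ∀ b ∈ t, a ≤ b) : ∃ x, (∀ a ∈ s, a ≤ x) ∧ ∀ b ∈ t, x ≤ b := by
  rcases s.eq_empty_or_nonempty with rfl | hs
  · obtain ⟨x, hx⟩ := t.bddBelow
    exact ⟨x, by simp, fun b hb => hx hb⟩
  · exact ⟨s.max' hs, s.le_max', fun b hb => h _ (s.max'_mem hs) b hb⟩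

section FourierMotzkin

variable {ι : Type*}

theorem exists_nonneg_smul_add [Fintype ι] {c r : ι → ℝ} (h₀ : ∀ k, c k = 0 → 0 ≤ r k)
    (h : ∀ p q, 0 < c p → c q < 0 → 0 ≤ -c q * r p + c p * r q) :
    ∃ t : ℝ, 0 ≤ t • c + r := by
  -- `0 ≤ c k * t + r k` says `B k ≤ t` if `c k > 0` and `t ≤ B k` if `c k < 0`.
  set B : ι → ℝ := fun k => -r k / c k
  have hB : ∀ p, 0 < c p → ∀ q, c q < 0 → B p ≤ B q := by
    intro p hp q hq
    have e : -c q * r p + c p * r q = c p * c q * (B p - B q) := by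
      have := hp.ne'; have := hq.ne
      simp only [B]; field_simp; ring
    linarith [nonpos_of_mul_nonneg_right (e ▸ h p q hp hq) (mul_neg_of_pos_of_neg hp hq)]
  obtain ⟨t, hlow, hup⟩ := Finset.exists_between_of_forall_le
    (s := (Finset.univ.filter (0 < c ·)).image B) (t := (Finset.univ.filter (c · < 0)).image B)
    (by simpa only [Finset.forall_mem_image, Finset.mem_filter, Finset.mem_univ, true_and])
  refine ⟨t, fun k => ?_⟩
  simp only [Pi.add_apply, Pi.smul_apply, smul_eq_mul, Pi.zero_apply]
  rcases lt_trichotomy (c k) 0 with hk | hk | hk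
  · have := hup (B k) (Finset.mem_image_of_mem B (by simpa using hk))
    rw [le_div_iff_of_neg hk] at this
    linarith
  · simpa [hk] using h₀ k hk
  · have := hlow (B k) (Finset.mem_image_of_mem B (by simpa using hk))
    rw [div_le_iff₀ hk] at this
    linarith

variable [DecidableEq ι]

/-- Row `inl k` keeps constraint `k` when `c k = 0`; row `inr (p, q)`, for `c p > 0 > c q`, is the
positive combination of constraints `p` and `q` in which the coefficient `c` cancels. -/
noncomputable def fourierMotzkinMatrix (c : ι → ℝ) : Matrix (ι ⊕ ι × ι) ι ℝ :=
  Matrix.of <| Sum.elim (fun k => if c k = 0 then Pi.single k 1 else 0)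
    fun pq => if 0 < c pq.1 ∧ c pq.2 < 0 then
      (-c pq.2) • Pi.single pq.1 1 + c pq.1 • Pi.single pq.2 1 else 0

variable (c : ι → ℝ)

theorem fourierMotzkinMatrix_nonneg (r : ι ⊕ ι × ι) (j : ι) : 0 ≤ fourierMotzkinMatrix c r j := by
  have hsingle : ∀ i, 0 ≤ (Pi.single i 1 : ι → ℝ) j := fun i => by
    rw [Pi.single_apply]; split_ifs <;> norm_num
  rcases r with k | ⟨p, q⟩
  · simp only [fourierMotzkinMatrix, of_apply, Sum.elim_inl]
    split_ifs
    exacts [hsingle k, le_rfl]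
  · simp only [fourierMotzkinMatrix, of_apply, Sum.elim_inr]
    split_ifs with h
    · exact add_nonneg (smul_nonneg (neg_nonneg.2 h.2.le) (hsingle p))
        (smul_nonneg h.1.le (hsingle q))
    · exact le_rfl

variable [Fintype ι]

@[simp]
theorem fourierMotzkinMatrix_mulVec_inl (v : ι → ℝ) (k : ι) :
    (fourierMotzkinMatrix c *ᵥ v) (.inl k) = if c k = 0 then v k else 0 := by
  split_ifs <;> simp [fourierMotzkinMatrix, mulVec, *]

@[simp]
theorem fourierMotzkinMatrix_mulVec_inr (v : ι → ℝ) (p q : ι) :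
    (fourierMotzkinMatrix c *ᵥ v) (.inr (p, q)) =
      if 0 < c p ∧ c q < 0 then -c q * v p + c p * v q else 0 := by
  split_ifs with h
  · simp only [mulVec, fourierMotzkinMatrix, of_apply, Sum.elim_inr, if_pos h]
    show (-c q • Pi.single p 1 + c p • Pi.single q 1) ⬝ᵥ v = _
    simp [add_dotProduct, smul_dotProduct]
  · simp [fourierMotzkinMatrix, mulVec, h]

theorem fourierMotzkinMatrix_mulVec_self : fourierMotzkinMatrix c *ᵥ c = 0 := by
  ext (k | ⟨p, q⟩)
  · simp
  · rw [fourierMotzkinMatrix_mulVec_inr]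
    split_ifs <;> simp only [Pi.zero_apply]; ring

theorem exists_nonneg_smul_add_of_fourierMotzkinMatrix_mulVec_nonneg {r : ι → ℝ}
    (h : 0 ≤ fourierMotzkinMatrix c *ᵥ r) : ∃ t : ℝ, 0 ≤ t • c + r :=
  exists_nonneg_smul_add (fun k hk => by simpa [hk] using h (.inl k))
    fun p q hp hq => by simpa [hp, hq] using h (.inr (p, q))

end FourierMotzkin

theorem Matrix.farkas_fin {n : ℕ} :
    ∀ {ι : Type*} [Fintype ι] (A : Matrix ι (Fin n) ℝ) (b : ι → ℝ),
      (¬ ∃ x, b ≤ A *ᵥ x) → ∃ y, 0 ≤ y ∧ y ᵥ* A = 0 ∧ 0 < y ⬝ᵥ b := by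
  classical
  induction n with
  | zero =>
    intro ι _ A b hinf
    obtain ⟨k, hk⟩ : ∃ k, 0 < b k := by simpa [mulVec_empty, Pi.le_def] using hinf
    exact ⟨Pi.single k 1, Pi.single_nonneg.2 zero_le_one, funext fun j => j.elim0, by simpa⟩
  | succ n ih =>
    intro ι _ A b hinf
    set c : ι → ℝ := fun k => A k 0
    set M := fourierMotzkinMatrix c
    obtain ⟨Λ, hΛ, hΛA, hΛb⟩ := ih ((M * A).submatrix id Fin.succ) (M *ᵥ b) <| by
      rintro ⟨x, hx⟩
      obtain ⟨t, ht⟩ : ∃ t : ℝ, 0 ≤ t • c + (A.submatrix id Fin.succ *ᵥ x - b) := by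
        refine exists_nonneg_smul_add_of_fourierMotzkinMatrix_mulVec_nonneg c ?_
        rw [mulVec_sub, mulVec_mulVec]
        exact sub_nonneg.2 hx
      have hA : A *ᵥ Fin.cons t x = t • c + A.submatrix id Fin.succ *ᵥ x := mulVec_cons A t x
      refine hinf ⟨Fin.cons t x, fun k => ?_⟩
      have := ht k
      simp only [hA, Pi.add_apply, Pi.sub_apply, Pi.zero_apply] at this ⊢
      linarith
    refine ⟨Λ ᵥ* M, fun j => Finset.sum_nonneg fun r _ =>
      mul_nonneg (hΛ r) (fourierMotzkinMatrix_nonneg c r j), ?_, ?_⟩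
    · rw [vecMul_vecMul]
      ext j
      refine Fin.cases ?_ (fun j => congrFun hΛA j) j
      show Λ ⬝ᵥ M *ᵥ c = 0
      rw [fourierMotzkinMatrix_mulVec_self, dotProduct_zero]
    · rwa [dotProduct_mulVec] at hΛb

theorem Matrix.farkas {ι σ : Type*} [Fintype ι] [Fintype σ] (A : Matrix ι σ ℝ) (b : ι → ℝ)
    (hinf : ¬ ∃ x, b ≤ A *ᵥ x) : ∃ y, 0 ≤ y ∧ y ᵥ* A = 0 ∧ 0 < y ⬝ᵥ b := by
  let e := Fintype.equivFin σ
  obtain ⟨y, hy, hyA, hyb⟩ := farkas_fin (A.submatrix id e.symm) b fun ⟨x, hx⟩ =>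
    hinf ⟨x ∘ e, by simpa [submatrix_mulVec_equiv] using hx⟩
  exact ⟨y, hy, funext fun j => by simpa [vecMul] using congrFun hyA (e j), hyb⟩

theorem Matrix.motzkin_pos {κ σ : Type*} [Fintype κ] [Fintype σ] (G : Matrix κ σ ℝ) (h : κ → ℝ)
    (hinf : ¬ ∃ a, (∀ i, 0 < a i) ∧ h ≤ G *ᵥ a) :
    ∃ y, 0 ≤ y ∧ y ᵥ* G ≤ 0 ∧ 0 ≤ y ⬝ᵥ h ∧ (0 < y ⬝ᵥ h ∨ y ᵥ* G ≠ 0) := by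
  classical
  -- Homogenize: `a > 0, h ≤ G a` is solvable iff `h t ≤ G a, a ≥ 1, t ≥ 1` is.
  obtain ⟨z, hz, hzA, hzb⟩ := farkas
    (fromRows (fromCols G (of fun k (_ : Unit) => -h k)) (1 : Matrix (σ ⊕ Unit) (σ ⊕ Unit) ℝ))
    (Sum.elim 0 1) <| by
      rintro ⟨x, hx⟩
      simp only [Pi.le_def, fromRows_mulVec, fromCols_mulVec, one_mulVec, Sum.forall,
        Sum.elim_inl, Sum.elim_inr, Pi.add_apply, Pi.zero_apply, Pi.one_apply, mulVec, dotProduct,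
        of_apply, Finset.univ_unique, Finset.sum_singleton, Function.comp_apply,
        PUnit.default_eq_unit] at hx
      obtain ⟨hG, hone, ht⟩ := hx
      have ht : 0 < x (.inr ()) := one_pos.trans_le (ht ())
      refine hinf ⟨(x (.inr ()))⁻¹ • (x ∘ Sum.inl), fun i => ?_, fun k => ?_⟩
      · exact mul_pos (inv_pos.2 ht) (one_pos.trans_le (hone i))
      · rw [mulVec_smul, Pi.smul_apply, smul_eq_mul, le_inv_mul_iff₀ ht]
        simp only [mulVec, dotProduct, Function.comp_apply]
        linarith [hG k]
  simp only [vecMul_fromRows, vecMul_fromCols, vecMul_one, funext_iff, Sum.forall,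
    Pi.add_apply, Sum.elim_inl, Sum.elim_inr, Pi.zero_apply, Function.comp_apply] at hzA
  simp only [dotProduct, Fintype.sum_sum_type, Sum.elim_inl, Sum.elim_inr, Pi.zero_apply,
    Pi.one_apply, mul_zero, mul_one, Finset.sum_const_zero, zero_add, Finset.univ_unique,
    Finset.sum_singleton, PUnit.default_eq_unit] at hzb
  obtain ⟨hzG, hzh⟩ := hzA
  have hzh : z ∘ Sum.inl ⬝ᵥ h = z (.inr (.inr ())) := by
    simpa [vecMul, dotProduct, neg_add_eq_zero, dotProduct_comm] using hzh ()
  have hz : ∀ j, 0 ≤ z j := hz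
  refine ⟨z ∘ Sum.inl, fun k => hz _, fun i => ?_, hzh ▸ hz _, ?_⟩
  · show (z ∘ Sum.inl ᵥ* G) i ≤ 0
    linarith [hzG i, hz (.inr (.inl i))]
  rcases lt_or_ge 0 (z (.inr (.inr ()))) with ht | ht
  · exact .inl (hzh ▸ ht)
  obtain ⟨i, -, hi⟩ : ∃ i ∈ Finset.univ, (0 : σ → ℝ) i < z (.inr (.inl i)) :=
    Finset.exists_lt_of_sum_lt (by simp only [Pi.zero_apply, Finset.sum_const_zero]; linarith)
  refine .inr fun hG => ?_
  have := hzG i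
  rw [hG, Pi.zero_apply, zero_add] at this
  exact hi.ne' this

section Utilities

variable {E : Type*}

def StrongPareto {ι : Type*} (ε : ℝ) (X : Set E) (u₀ : E → ℝ) (u : ι → E → ℝ) : Prop :=
  ∀ x ∈ X, ∀ y ∈ X, (∀ i, u i y ≤ u i x) →
    (u₀ y - ε ≤ u₀ x ∧ ((∃ i, u i y < u i x) → u₀ y - ε < u₀ x))

theorem strongPareto_of_abs_sub_le {ι : Type*} [Fintype ι] {ε : ℝ} {X : Set E} {u₀ : E → ℝ}
    {u : ι → E → ℝ} {a : ι → ℝ} (ha : ∀ i, 0 < a i) {b : ℝ}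
    (h : ∀ x ∈ X, |u₀ x - ((∑ i, a i * u i x) + b)| ≤ ε / 2) : StrongPareto ε X u₀ u := by
  intro x hx y hy hle
  have hx := abs_le.1 (h x hx)
  have hy := abs_le.1 (h y hy)
  have hw : ∑ i, a i * u i y ≤ ∑ i, a i * u i x :=
    Finset.sum_le_sum fun i _ => mul_le_mul_of_nonneg_left (hle i) (ha i).le
  refine ⟨by linarith, fun ⟨j, hj⟩ => ?_⟩
  have hw : ∑ i, a i * u i y < ∑ i, a i * u i x :=
    Finset.sum_lt_sum (fun i _ => mul_le_mul_of_nonneg_left (hle i) (ha i).le)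
      ⟨j, Finset.mem_univ j, mul_lt_mul_of_pos_left hj (ha j)⟩
  linarith

variable [AddCommGroup E] [Module ℝ E]

def MixtureAffineOn (X : Set E) (f : E → ℝ) : Prop :=
  ∀ x ∈ X, ∀ y ∈ X, ∀ l : ℝ, 0 ≤ l → l ≤ 1 → f (l • x + (1 - l) • y) = l * f x + (1 - l) * f y

namespace MixtureAffineOn

variable {X : Set E} {f g : E → ℝ}

theorem sub (hf : MixtureAffineOn X f) (hg : MixtureAffineOn X g) : MixtureAffineOn X (f - g) :=
  fun x hx y hy l h₀ h₁ => by
    simp only [Pi.sub_apply, hf x hx y hy l h₀ h₁, hg x hx y hy l h₀ h₁]; ring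

theorem const_smul (hf : MixtureAffineOn X f) (c : ℝ) : MixtureAffineOn X (c • f) :=
  fun x hx y hy l h₀ h₁ => by simp only [Pi.smul_apply, smul_eq_mul, hf x hx y hy l h₀ h₁]; ring

theorem sum {ι : Type*} (s : Finset ι) {f : ι → E → ℝ} (hf : ∀ i ∈ s, MixtureAffineOn X (f i)) :
    MixtureAffineOn X (∑ i ∈ s, f i) := fun x hx y hy l h₀ h₁ => by
  simp only [Finset.sum_apply, Finset.mul_sum, ← Finset.sum_add_distrib]
  exact Finset.sum_congr rfl fun i hi => hf i hi x hx y hy l h₀ h₁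

theorem map_add (hf : MixtureAffineOn X f) {x y : E} (hx : x ∈ X) (hy : y ∈ X) {a b : ℝ}
    (ha : 0 ≤ a) (hb : 0 ≤ b) (hab : a + b = 1) : f (a • x + b • y) = a • f x + b • f y := by
  obtain rfl : b = 1 - a := by linarith
  exact hf x hx y hy a ha (by linarith)

theorem convexOn (hf : MixtureAffineOn X f) (hX : Convex ℝ X) : ConvexOn ℝ X f :=
  ⟨hX, fun _ hx _ hy _ _ ha hb hab => (hf.map_add hx hy ha hb hab).le⟩

theorem concaveOn (hf : MixtureAffineOn X f) (hX : Convex ℝ X) : ConcaveOn ℝ X f :=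
  ⟨hX, fun _ hx _ hy _ _ ha hb hab => (hf.map_add hx hy ha hb hab).ge⟩

theorem map_sum (hf : MixtureAffineOn X f) (hX : Convex ℝ X) {ι : Type*} {s : Finset ι}
    {w : ι → ℝ} {p : ι → E} (h₀ : ∀ i ∈ s, 0 ≤ w i) (h₁ : ∑ i ∈ s, w i = 1)
    (hp : ∀ i ∈ s, p i ∈ X) : f (∑ i ∈ s, w i • p i) = ∑ i ∈ s, w i * f (p i) :=
  le_antisymm ((hf.convexOn hX).map_sum_le h₀ h₁ hp) ((hf.concaveOn hX).le_map_sum h₀ h₁ hp)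

theorem exists_abs_sub_le_half {T : Finset E} (hf : MixtureAffineOn (convexHull ℝ ↑T) f)
    {ε : ℝ} (hT : ∀ s ∈ T, ∀ t ∈ T, f s - f t ≤ ε) :
    ∃ b, ∀ x ∈ convexHull ℝ ↑T, |f x - b| ≤ ε / 2 := by
  rcases T.eq_empty_or_nonempty with rfl | hne
  · exact ⟨0, by simp⟩
  obtain ⟨tmax, htmax, hmax⟩ := T.exists_max_image f hne
  obtain ⟨tmin, htmin, hmin⟩ := T.exists_min_image f hne
  refine ⟨(f tmax + f tmin) / 2, fun x hx => abs_le.2 ⟨?_, ?_⟩⟩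
  · obtain ⟨t, ht, hle⟩ := (hf.concaveOn (convex_convexHull ℝ _)).exists_le_of_mem_convexHull
      (subset_convexHull ℝ _) hx
    linarith [hmin t ht, hT tmax htmax tmin htmin]
  · obtain ⟨t, ht, hle⟩ := (hf.convexOn (convex_convexHull ℝ _)).exists_ge_of_mem_convexHull
      (subset_convexHull ℝ _) hx
    linarith [hmax t ht, hT tmax htmax tmin htmin]

end MixtureAffineOn

variable {ι : Type*} {ε : ℝ} {X : Set E} {u₀ : E → ℝ} {u : ι → E → ℝ}

/-- Strong Pareto, tested on the mixtures `∑ (μ k / ∑ μ) • x k` and `∑ (μ k / ∑ μ) • y k`. -/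
theorem StrongPareto.dotProduct_nonpos (hP : StrongPareto ε X u₀ u) (hX : Convex ℝ X)
    (hu₀ : MixtureAffineOn X u₀) (hu : ∀ i, MixtureAffineOn X (u i)) {κ : Type*} [Fintype κ]
    {x y : κ → E} (hx : ∀ k, x k ∈ X) (hy : ∀ k, y k ∈ X) {μ : κ → ℝ} (hμ : 0 ≤ μ)
    (hG : μ ᵥ* of (fun k i => u i (x k) - u i (y k)) ≤ 0) :
    μ ⬝ᵥ (fun k => u₀ (x k) - u₀ (y k) - ε) ≤ 0 ∧
      (μ ᵥ* of (fun k i => u i (x k) - u i (y k)) ≠ 0 →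
        μ ⬝ᵥ (fun k => u₀ (x k) - u₀ (y k) - ε) < 0) := by
  rcases eq_or_ne μ 0 with rfl | hμ0
  · simp
  have hμ : ∀ k, 0 ≤ μ k := hμ
  set L := ∑ k, μ k
  have hL : 0 < L := by
    obtain ⟨k, hk⟩ := Function.ne_iff.1 hμ0
    exact Finset.sum_pos' (fun k _ => hμ k) ⟨k, Finset.mem_univ k, (hμ k).lt_of_ne' hk⟩
  have hw₀ : ∀ k ∈ Finset.univ, 0 ≤ μ k / L := fun k _ => div_nonneg (hμ k) hL.le
  have hw₁ : ∑ k, μ k / L = 1 := by rw [← Finset.sum_div, div_self hL.ne']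
  have hmix : ∀ f, MixtureAffineOn X f →
      f (∑ k, (μ k / L) • x k) - f (∑ k, (μ k / L) • y k) =
        L⁻¹ * ∑ k, μ k * (f (x k) - f (y k)) := by
    intro f hf
    rw [hf.map_sum hX hw₀ hw₁ fun k _ => hx k, hf.map_sum hX hw₀ hw₁ fun k _ => hy k,
      ← Finset.sum_sub_distrib, Finset.mul_sum]
    exact Finset.sum_congr rfl fun k _ => by ring
  have hui : ∀ i, u i (∑ k, (μ k / L) • x k) - u i (∑ k, (μ k / L) • y k) =
      L⁻¹ * (μ ᵥ* of (fun k i => u i (x k) - u i (y k))) i := fun i => by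
    rw [hmix _ (hu i)]; rfl
  have hu₀ : u₀ (∑ k, (μ k / L) • x k) - u₀ (∑ k, (μ k / L) • y k) =
      L⁻¹ * (μ ⬝ᵥ fun k => u₀ (x k) - u₀ (y k) - ε) + ε := by
    rw [hmix _ hu₀]
    simp only [dotProduct, mul_sub, Finset.sum_sub_distrib, ← Finset.sum_mul]
    field_simp
    ring
  have hpar := hP _ (hX.sum_mem hw₀ hw₁ fun k _ => hy k) _ (hX.sum_mem hw₀ hw₁ fun k _ => hx k)
    fun i => by linarith [hui i, mul_nonpos_of_nonneg_of_nonpos (inv_nonneg.2 hL.le) (hG i)]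
  refine ⟨nonpos_of_mul_nonpos_right (by linarith [hpar.1]) (inv_pos.2 hL), fun hne => ?_⟩
  obtain ⟨i, hi⟩ := Function.ne_iff.1 hne
  have hlt := hpar.2 ⟨i, by
    linarith [hui i, mul_neg_of_pos_of_neg (inv_pos.2 hL) ((hG i).lt_of_ne hi)]⟩
  exact (pos_iff_neg_of_mul_neg (by linarith : L⁻¹ * _ < 0)).1 (inv_pos.2 hL)

theorem StrongPareto.exists_pos_weights [Fintype ι] (hP : StrongPareto ε X u₀ u)
    (hX : Convex ℝ X) (hu₀ : MixtureAffineOn X u₀) (hu : ∀ i, MixtureAffineOn X (u i))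
    {κ : Type*} [Fintype κ] {x y : κ → E} (hx : ∀ k, x k ∈ X) (hy : ∀ k, y k ∈ X) :
    ∃ a : ι → ℝ, (∀ i, 0 < a i) ∧
      ∀ k, u₀ (x k) - u₀ (y k) - ε ≤ ∑ i, (u i (x k) - u i (y k)) * a i := by
  by_contra hinf
  obtain ⟨μ, hμ, hG, hh, hstrict⟩ := motzkin_pos (of fun k i => u i (x k) - u i (y k))
    (fun k => u₀ (x k) - u₀ (y k) - ε) fun ⟨a, ha, hle⟩ => hinf ⟨a, ha, hle⟩
  obtain ⟨hnonpos, hneg⟩ := hP.dotProduct_nonpos hX hu₀ hu hx hy hμ hG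
  rcases hstrict with hpos | hne
  · exact hpos.not_ge hnonpos
  · exact (hneg hne).not_ge hh

end Utilities

theorem stmt11_general {E : Type*} [AddCommGroup E] [Module ℝ E]
    {N : ℕ} {ε : ℝ}
    (X : Set E)
    (T : Finset E) (hXT : X = convexHull ℝ (T : Set E))
    (u₀ : E → ℝ) (u : Fin N → E → ℝ)
    (haff₀ : ∀ x ∈ X, ∀ y ∈ X, ∀ l : ℝ, 0 ≤ l → l ≤ 1 →
      u₀ (l • x + (1 - l) • y) = l * u₀ x + (1 - l) * u₀ y)
    (haff : ∀ i : Fin N, ∀ x ∈ X, ∀ y ∈ X, ∀ l : ℝ, 0 ≤ l → l ≤ 1 →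
      u i (l • x + (1 - l) • y) = l * u i x + (1 - l) * u i y) :
    (∀ x ∈ X, ∀ y ∈ X, (∀ i, u i y ≤ u i x) →
        (u₀ y - ε ≤ u₀ x ∧ ((∃ i, u i y < u i x) → u₀ y - ε < u₀ x))) ↔
      (∃ (a : Fin N → ℝ) (b : ℝ), (∀ i, 0 < a i) ∧
        ∀ x ∈ X, |u₀ x - ((∑ i, a i * u i x) + b)| ≤ ε / 2) := by
  subst hXT
  refine ⟨fun hP => ?_, fun ⟨a, b, ha, hb⟩ => strongPareto_of_abs_sub_le ha hb⟩
  have hT : ∀ t ∈ T, t ∈ convexHull ℝ (T : Set E) := fun t ht => subset_convexHull ℝ _ ht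
  obtain ⟨a, ha, hpairs⟩ := StrongPareto.exists_pos_weights hP (convex_convexHull ℝ _) haff₀ haff
    (x := fun p : T × T => p.1) (y := fun p => p.2) (fun p => hT _ p.1.2) (fun p => hT _ p.2.2)
  have hf : MixtureAffineOn (convexHull ℝ ↑T) (u₀ - ∑ i, a i • u i) :=
    MixtureAffineOn.sub haff₀ (MixtureAffineOn.sum _ fun i _ => MixtureAffineOn.const_smul (haff i) (a i))
  obtain ⟨b, hb⟩ := hf.exists_abs_sub_le_half fun s hs t ht => by
    have := hpairs (⟨s, hs⟩, ⟨t, ht⟩)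
    simp only [Pi.sub_apply, Finset.sum_apply, Pi.smul_apply, smul_eq_mul, sub_mul,
      Finset.sum_sub_distrib, mul_comm (a _)] at this ⊢
    linarith
  refine ⟨a, b, ha, fun x hx => ?_⟩
  simpa [sub_add_eq_sub_sub] using hb x hx

/-- Theorem: aggregation with `ε`-Strong Pareto, polyhedral case.
Let `ε ≥ 0` and let `(X, u₀, {u₁,…,u_N})` be a setting with vN-M utilities where `X`
is the convex hull of finitely many points of the ambient real vector space.  Then
`ε`-Strong Pareto holds iff there is a utilitarian aggregator `w = Σᵢ aᵢ uᵢ + b` with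
all `aᵢ > 0` and `‖u₀ − w‖∞ ≤ ε/2`. -/
theorem stmt11 {E : Type*} [AddCommGroup E] [Module ℝ E]
    {N : ℕ} (hN : 1 ≤ N) {ε : ℝ} (hε : 0 ≤ ε)
    (X : Set E) (hXne : X.Nonempty) (hXconv : Convex ℝ X)
    (T : Finset E) (hXT : X = convexHull ℝ (T : Set E))
    (u₀ : E → ℝ) (u : Fin N → E → ℝ)
    (haff₀ : ∀ x ∈ X, ∀ y ∈ X, ∀ l : ℝ, 0 ≤ l → l ≤ 1 →
      u₀ (l • x + (1 - l) • y) = l * u₀ x + (1 - l) * u₀ y)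
    (haff : ∀ i : Fin N, ∀ x ∈ X, ∀ y ∈ X, ∀ l : ℝ, 0 ≤ l → l ≤ 1 →
      u i (l • x + (1 - l) • y) = l * u i x + (1 - l) * u i y) :
    (∀ x ∈ X, ∀ y ∈ X, (∀ i, u i y ≤ u i x) →
        (u₀ y - ε ≤ u₀ x ∧ ((∃ i, u i y < u i x) → u₀ y - ε < u₀ x))) ↔
      (∃ (a : Fin N → ℝ) (b : ℝ), (∀ i, 0 < a i) ∧
        ∀ x ∈ X, |u₀ x - ((∑ i, a i * u i x) + b)| ≤ ε / 2) :=
  stmt11_general X T hXT u₀ u haff₀ haff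
end

section
/- Let ε ∈ [0,1] and let P₀, P₁, …, P_N be nonatomic probability measures on a measurable space (S, Σ_S). Let Σ_u = {E ∈ Σ_S : P₀(E) = P_i(E) for all i = 1,…,N}, and suppose that for all E ∈ Σ_S and F ∈ Σ_u, P_i(E) ≥ P_i(F) for all i = 1,…,N implies P₀(E) ≥ P₀(F) − ε/2. Then for every E ∈ Σ_S: P₀(E) ≥ min_{1≤i≤N} P_i(E) − ε/2. -/
open MeasureTheory

def Nonatomic {S : Type*} [MeasurableSpace S] (μ : Measure S) : Prop :=
  ∀ E : Set S, MeasurableSet E → 0 < μ E →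
    ∃ F : Set S, F ⊆ E ∧ MeasurableSet F ∧ 0 < μ F ∧ μ F < μ E

/-!
Let `m = min_i P_i(E)`. It suffices to find a measurable `F` with `P₀(F) = P_i(F) = m` for all
`i`: then `F ∈ Σ_u` and `P_i(F) ≤ P_i(E)`, so the hypothesis gives `P₀(E) ≥ m - ε/2`.

Such an `F` exists for any finitely many nonatomic probability measures `Q_j` and any
`m ∈ [0,1]` (a case of Lyapunov's convexity theorem), by Lindenstrauss's argument. In `L²(ν)`,
`ν = ∑ Q_j`, the `[0,1]`-valued `g` with `∫ g dQ_j = m` for all `j` form a nonempty bounded set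
which is weakly closed, hence weakly compact, and so has an extreme point `g` (Krein–Milman).
If `0 < g < 1` on a set of positive measure, nonatomicity splits that set into more pieces than
there are constraints, and a nontrivial combination of the pieces gives a perturbation `±h`
preserving all constraints, contradicting extremality. So `g` is the indicator of the set `F`.
-/

open Set Function
open scoped InnerProductSpace

theorem sum_mul_indicator_apply_of_mem {α κ : Type*} [Fintype κ] {B : κ → Set α}
    (hB : Pairwise (Disjoint on B)) (a : κ → ℝ) (w : α → ℝ) {x : α} {k : κ} (hx : x ∈ B k) :
    ∑ j, a j * (B j).indicator w x = a k * w x := by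
  rw [Finset.sum_eq_single k (fun j _ hjk => by
    rw [indicator_of_notMem ((hB hjk).notMem_of_mem_right hx), mul_zero]) (by simp),
    indicator_of_mem hx]

theorem eq_zero_of_mem_extremePoints_of_add_mem_of_sub_mem {E : Type*} [AddCommGroup E]
    [Module ℝ E] {A : Set E} {x h : E} (hx : x ∈ extremePoints ℝ A) (hadd : x + h ∈ A)
    (hsub : x - h ∈ A) : h = 0 := by
  have := hx.2 hadd hsub ⟨1 / 2, 1 / 2, by norm_num, by norm_num, by norm_num, by module⟩
  simpa using this

section InnerProductSpace

variable {E : Type*} [NormedAddCommGroup E] [InnerProductSpace ℝ E]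

theorem exists_ne_zero_forall_inner_sum_smul_eq_zero {ι κ : Type*} [Fintype ι] [Fintype κ]
    (f : ι → E) (u : κ → E) (hcard : Fintype.card ι < Fintype.card κ) :
    ∃ a : κ → ℝ, a ≠ 0 ∧ (∀ k, |a k| ≤ 1) ∧ ∀ i, ⟪f i, ∑ k, a k • u k⟫_ℝ = 0 := by
  have : ¬ LinearIndependent ℝ fun k i => ⟪f i, u k⟫_ℝ := fun hli =>
    hcard.not_ge (by simpa using hli.fintype_card_le_finrank)
  obtain ⟨a, hsum, k₀, hk₀⟩ := Fintype.not_linearIndependent_iff.1 this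
  have ha : a ≠ 0 := fun ha => hk₀ (by simp [ha])
  refine ⟨‖a‖⁻¹ • a, smul_ne_zero (inv_ne_zero (norm_ne_zero_iff.2 ha)) ha, fun k => ?_,
    fun i => ?_⟩
  · rw [Pi.smul_apply, smul_eq_mul, abs_mul, abs_inv, abs_norm, ← Real.norm_eq_abs]
    exact inv_mul_le_one_of_le₀ (norm_le_pi_norm a k) (norm_nonneg a)
  · simpa [inner_sum, inner_smul_right, mul_assoc, ← Finset.mul_sum] using
      Or.inr (congrFun hsum i)

open InnerProductSpace in
theorem extremePoints_nonempty_of_isClosed_weakDual [CompleteSpace E] {K : Set E}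
    (hne : K.Nonempty) (hbdd : Bornology.IsBounded K)
    (hclosed : IsClosed {φ : WeakDual ℝ E | (toDual ℝ E).symm (WeakDual.toStrongDual φ) ∈ K}) :
    (extremePoints ℝ K).Nonempty := by
  let L : WeakDual ℝ E ≃ₗ[ℝ] E :=
    { (toDual ℝ E).symm.toAddEquiv with
      map_smul' := (toDual ℝ E).symm.map_smulₛₗ }
  obtain ⟨R, hR⟩ := hbdd.exists_norm_le
  have hcompact : IsCompact (L ⁻¹' K) := by
    refine (WeakDual.isCompact_closedBall 0 R).of_isClosed_subset hclosed fun φ hφ => ?_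
    have : ‖(toDual ℝ E).symm (WeakDual.toStrongDual φ)‖ ≤ R := hR _ hφ
    rw [LinearIsometryEquiv.norm_map] at this
    simpa using this
  have : LocallyConvexSpace ℝ (WeakDual ℝ E) := WeakBilin.locallyConvexSpace
  obtain ⟨φ, hφ⟩ := hcompact.extremePoints_nonempty (hne.preimage L.surjective)
  have hLK : L '' (L ⁻¹' K) = K := image_preimage_eq K L.surjective
  exact ⟨L φ, hLK ▸ image_extremePoints L _ ▸ mem_image_of_mem L hφ⟩

end InnerProductSpace

section Measure

variable {S : Type*} [MeasurableSpace S]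

theorem measure_sdiff_pos_iff {μ : Measure S} [IsFiniteMeasure μ] {E F : Set S} (hFE : F ⊆ E)
    (hF : MeasurableSet F) : 0 < μ (E \ F) ↔ μ F < μ E := by
  rw [measure_sdiff hFE hF.nullMeasurableSet (measure_ne_top μ F), tsub_pos_iff_lt]

theorem Nonatomic.sum {ι : Type*} [Finite ι] {Q : ι → Measure S} [∀ i, IsFiniteMeasure (Q i)]
    (hQ : ∀ i, Nonatomic (Q i)) : Nonatomic (Measure.sum Q) := by
  intro E hE hpos
  obtain ⟨i, hi⟩ : ∃ i, 0 < Q i E := by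
    by_contra! h
    simp_all [Measure.sum_apply _ hE]
  obtain ⟨F, hFE, hF, hFpos, hFlt⟩ := hQ i E hE hi
  refine ⟨F, hFE, hF, hFpos.trans_le (Measure.le_sum Q i F), ?_⟩
  rw [← measure_sdiff_pos_iff hFE hF] at hFlt ⊢
  exact hFlt.trans_le (Measure.le_sum Q i _)

theorem Nonatomic.exists_pairwise_disjoint {ν : Measure S} [IsFiniteMeasure ν] (hν : Nonatomic ν)
    (n : ℕ) {E : Set S} (hE : MeasurableSet E) (hpos : 0 < ν E) :
    ∃ B : Fin n → Set S, (∀ k, MeasurableSet (B k) ∧ B k ⊆ E ∧ 0 < ν (B k)) ∧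
      Pairwise (Disjoint on B) := by
  induction n generalizing E with
  | zero => exact ⟨Fin.elim0, Fin.rec0, fun k => k.elim0⟩
  | succ n ih =>
    obtain ⟨F, hFE, hF, hFpos, hFlt⟩ := hν E hE hpos
    obtain ⟨B, hB, hBdisj⟩ := ih (hE.diff hF) ((measure_sdiff_pos_iff hFE hF).2 hFlt)
    refine ⟨Fin.cons F B, Fin.cases ⟨hF, hFE, hFpos⟩
      fun k => ⟨(hB k).1, (hB k).2.1.trans sdiff_subset, (hB k).2.2⟩, ?_⟩
    rw [pairwise_fin_succ_iff_of_isSymm]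
    exact ⟨fun k => disjoint_sdiff_right.mono_right (hB k).2.1, hBdisj⟩

theorem ae_mem_Icc_iff_forall_setIntegral_mem_Icc {ν : Measure S} [IsFiniteMeasure ν]
    {g : S → ℝ} (hg : Integrable g ν) :
    (∀ᵐ x ∂ν, g x ∈ Icc 0 1) ↔ ∀ A, MeasurableSet A → ∫ x in A, g x ∂ν ∈ Icc 0 (ν.real A) := by
  constructor
  · intro hg01 A hA
    refine ⟨setIntegral_nonneg_ae hA (hg01.mono fun x hx _ => hx.1), ?_⟩
    calc ∫ x in A, g x ∂ν ≤ ∫ _ in A, (1 : ℝ) ∂ν :=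
          integral_mono_ae hg.integrableOn (integrable_const 1)
            (ae_restrict_of_ae (hg01.mono fun x hx => hx.2))
      _ = ν.real A := by simp
  · intro hA
    have hlow : 0 ≤ᵐ[ν] g :=
      ae_nonneg_of_forall_setIntegral_nonneg hg fun A hA' _ => (hA A hA').1
    have hup : 0 ≤ᵐ[ν] fun x => 1 - g x := by
      refine ae_nonneg_of_forall_setIntegral_nonneg ((integrable_const 1).sub hg)
        fun A hA' _ => ?_
      rw [integral_sub (integrable_const 1).integrableOn hg.integrableOn, setIntegral_const,
        smul_eq_mul, mul_one, sub_nonneg]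
      exact (hA A hA').2
    filter_upwards [hlow, hup] with x h0 h1
    exact ⟨h0, sub_nonneg.1 h1⟩

theorem exists_inner_eq_integral_of_le {Q ν : Measure S} [IsFiniteMeasure ν] (hQ : Q ≤ ν) :
    ∃ q : Lp ℝ 2 ν, ∀ g : Lp ℝ 2 ν, ⟪q, g⟫_ℝ = ∫ x, g x ∂Q := by
  have hq : MemLp (fun x => (Q.rnDeriv ν x).toReal) 2 ν := by
    refine MemLp.of_bound (Q.measurable_rnDeriv ν).ennreal_toReal.aestronglyMeasurable 1 ?_
    filter_upwards [Measure.rnDeriv_le_one_of_le hQ] with x hx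
    simpa using ENNReal.toReal_mono ENNReal.one_ne_top hx
  have : IsFiniteMeasure Q := isFiniteMeasure_of_le ν hQ
  refine ⟨hq.toLp _, fun g => ?_⟩
  rw [L2.inner_def, ← integral_toReal_rnDeriv_mul (Measure.absolutelyContinuous_of_le hQ)]
  refine integral_congr_ae ?_
  filter_upwards [hq.coeFn_toLp] with x hx
  simp [hx, mul_comm]

theorem integral_indicatorConstLp_of_absolutelyContinuous {Q ν : Measure S} (hQ : Q ≪ ν)
    {A : Set S} (hA : MeasurableSet A) (hνA : ν A ≠ ⊤) (c : ℝ) :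
    ∫ x, indicatorConstLp 2 hA hνA c x ∂Q = Q.real A * c := by
  rw [integral_congr_ae (hQ.ae_le indicatorConstLp_coeFn), integral_indicator_const c hA,
    smul_eq_mul]

section UnitIntervalFiber

variable {ν : Measure S} [IsFiniteMeasure ν] {ι : Type*}

theorem Nonatomic.exists_ne_zero_forall_inner_eq_zero_abs_le (hν : Nonatomic ν) [Fintype ι]
    (f : ι → Lp ℝ 2 ν) {w : S → ℝ} (hw : Measurable w) (hw1 : ∀ x, w x ≤ 1)
    (hw0 : ∀ᵐ x ∂ν, 0 ≤ w x) (hpos : 0 < ν {x | 0 < w x}) :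
    ∃ h : Lp ℝ 2 ν, h ≠ 0 ∧ (∀ i, ⟪f i, h⟫_ℝ = 0) ∧ ∀ᵐ x ∂ν, |h x| ≤ w x := by
  obtain ⟨B, hB, hBdisj⟩ := hν.exists_pairwise_disjoint (Fintype.card ι + 1)
    (measurableSet_lt measurable_const hw) hpos
  have hmem : ∀ k, MemLp ((B k).indicator w) 2 ν := fun k => by
    refine MemLp.of_bound (hw.indicator (hB k).1).aestronglyMeasurable 1
      (ae_of_all _ fun x => ?_)
    by_cases hx : x ∈ B k
    · rw [indicator_of_mem hx, Real.norm_eq_abs, abs_of_pos ((hB k).2.1 hx)]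
      exact hw1 x
    · simp [indicator_of_notMem hx]
  set u : Fin (Fintype.card ι + 1) → Lp ℝ 2 ν := fun k => (hmem k).toLp _
  obtain ⟨a, ha, ha1, horth⟩ :=
    exists_ne_zero_forall_inner_sum_smul_eq_zero f u (by simp)
  have hh : ∀ᵐ x ∂ν, (∑ k, a k • u k) x = ∑ k, a k * (B k).indicator w x := by
    have hsmul : ∀ᵐ x ∂ν, ∀ k, (a k • u k) x = a k * (B k).indicator w x := by
      refine ae_all_iff.2 fun k => ?_
      filter_upwards [Lp.coeFn_smul (a k) (u k), (hmem k).coeFn_toLp] with x h1 h2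
      rw [h1, Pi.smul_apply, h2, smul_eq_mul]
    filter_upwards [Lp.coeFn_fun_finsetSum Finset.univ (fun k => a k • u k), hsmul]
      with x h1 h2
    simp only [h1, h2]
  refine ⟨∑ k, a k • u k, fun h0 => ?_, horth, ?_⟩
  · obtain ⟨k₀, hk₀⟩ := Function.ne_iff.1 ha
    have : ∀ᵐ x ∂ν, x ∉ B k₀ := by
      filter_upwards [hh, h0 ▸ Lp.coeFn_zero ℝ 2 ν] with x hx hx0 hxB
      rw [sum_mul_indicator_apply_of_mem hBdisj a w hxB, hx0] at hx
      exact mul_ne_zero hk₀ ((hB k₀).2.1 hxB).ne' hx.symm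
    exact (hB k₀).2.2.ne' (measure_eq_zero_iff_ae_notMem.2 this)
  · filter_upwards [hh, hw0] with x hx hx0
    rw [hx]
    by_cases hxB : ∃ k, x ∈ B k
    · obtain ⟨k, hxk⟩ := hxB
      rw [sum_mul_indicator_apply_of_mem hBdisj a w hxk, abs_mul, abs_of_nonneg hx0]
      exact mul_le_of_le_one_left hx0 (ha1 k)
    · push Not at hxB
      simp [indicator_of_notMem (hxB _), hx0]

def unitIntervalFiber (f : ι → Lp ℝ 2 ν) (t : ι → ℝ) : Set (Lp ℝ 2 ν) :=
  {g | (∀ᵐ x ∂ν, g x ∈ Icc 0 1) ∧ ∀ i, ⟪f i, g⟫_ℝ = t i}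

variable (f : ι → Lp ℝ 2 ν) (t : ι → ℝ)

theorem isBounded_unitIntervalFiber : Bornology.IsBounded (unitIntervalFiber f t) := by
  refine isBounded_iff_forall_norm_le.2 ⟨_, fun g hg => Lp.norm_le_of_ae_bound zero_le_one ?_⟩
  filter_upwards [hg.1] with x hx
  rw [Real.norm_eq_abs, abs_of_nonneg hx.1]
  exact hx.2

open InnerProductSpace in
theorem isClosed_toDual_symm_preimage_unitIntervalFiber :
    IsClosed {φ : WeakDual ℝ (Lp ℝ 2 ν) |
      (toDual ℝ _).symm (WeakDual.toStrongDual φ) ∈ unitIntervalFiber f t} := by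
  have : {φ : WeakDual ℝ (Lp ℝ 2 ν) |
        (toDual ℝ _).symm (WeakDual.toStrongDual φ) ∈ unitIntervalFiber f t} =
      (⋂ (A : Set S) (hA : MeasurableSet A),
        {φ | φ (indicatorConstLp 2 hA (measure_ne_top ν A) 1) ∈ Icc 0 (ν.real A)}) ∩
      ⋂ i, {φ | φ (f i) = t i} := by
    ext φ
    set g := (toDual ℝ _).symm (WeakDual.toStrongDual φ)
    have hφ : ∀ v, ⟪v, g⟫_ℝ = φ v := fun v => by
      rw [real_inner_comm, toDual_symm_apply]
      rfl
    have hφA : ∀ A (hA : MeasurableSet A),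
        ∫ x in A, g x ∂ν = φ (indicatorConstLp 2 hA (measure_ne_top ν A) 1) := fun A hA => by
      rw [← L2.inner_indicatorConstLp_one, hφ]
    change g ∈ unitIntervalFiber f t ↔ _
    simp only [unitIntervalFiber, mem_ofPred_eq, mem_inter_iff, mem_iInter,
      ae_mem_Icc_iff_forall_setIntegral_mem_Icc ((Lp.memLp g).integrable one_le_two), hφ]
    exact and_congr_left' (forall₂_congr fun A hA => by rw [hφA])
  rw [this]
  exact (isClosed_iInter fun A => isClosed_iInter fun hA =>
      isClosed_Icc.preimage (WeakDual.eval_continuous _)).inter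
    (isClosed_iInter fun i => isClosed_singleton.preimage (WeakDual.eval_continuous _))

theorem extremePoints_unitIntervalFiber_nonempty (hne : (unitIntervalFiber f t).Nonempty) :
    (extremePoints ℝ (unitIntervalFiber f t)).Nonempty :=
  extremePoints_nonempty_of_isClosed_weakDual hne (isBounded_unitIntervalFiber f t)
    (isClosed_toDual_symm_preimage_unitIntervalFiber f t)

variable {f t}

theorem Nonatomic.ae_eq_zero_or_one_of_mem_extremePoints [Fintype ι] (hν : Nonatomic ν)
    {g : Lp ℝ 2 ν} (hg : g ∈ extremePoints ℝ (unitIntervalFiber f t)) :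
    ∀ᵐ x ∂ν, g x = 0 ∨ g x = 1 := by
  by_contra hnot
  set w : S → ℝ := fun x => min (g x) (1 - g x)
  have hg_meas := (Lp.stronglyMeasurable g).measurable
  have hw1 : ∀ x, w x ≤ 1 := fun x => by
    simp only [w, min_le_iff]
    by_contra! h
    linarith [h.1, h.2]
  have hpos : 0 < ν {x | 0 < w x} := by
    refine pos_iff_ne_zero.2 fun h0 => hnot ?_
    filter_upwards [measure_eq_zero_iff_ae_notMem.1 h0, hg.1.1] with x hx hgx
    simp only [not_lt, w, min_le_iff] at hx
    rcases hx with hx | hx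
    · exact Or.inl (le_antisymm hx hgx.1)
    · exact Or.inr (by linarith [hgx.2])
  obtain ⟨h, hne, horth, hbound⟩ := hν.exists_ne_zero_forall_inner_eq_zero_abs_le f (w := w)
    (hg_meas.min (measurable_const.sub hg_meas)) hw1
    (hg.1.1.mono fun x hx => le_min hx.1 (sub_nonneg.2 hx.2)) hpos
  have hbound' : ∀ᵐ x ∂ν, g x + h x ∈ Icc 0 1 ∧ g x - h x ∈ Icc 0 1 := by
    filter_upwards [hbound] with x hx
    have := abs_le.1 (hx.trans (min_le_left _ _))
    have := abs_le.1 (hx.trans (min_le_right _ _))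
    constructor <;> constructor <;> linarith
  refine hne (eq_zero_of_mem_extremePoints_of_add_mem_of_sub_mem hg ⟨?_, fun i => ?_⟩
    ⟨?_, fun i => ?_⟩)
  · filter_upwards [Lp.coeFn_add g h, hbound'] with x hx hx'
    rw [hx, Pi.add_apply]
    exact hx'.1
  · rw [inner_add_right, hg.1.2 i, horth i, add_zero]
  · filter_upwards [Lp.coeFn_sub g h, hbound'] with x hx hx'
    rw [hx, Pi.sub_apply]
    exact hx'.2
  · rw [inner_sub_right, hg.1.2 i, horth i, sub_zero]

end UnitIntervalFiber

theorem exists_measurableSet_forall_measureReal_eq {ι : Type*} [Fintype ι]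
    {Q : ι → Measure S} [∀ i, IsProbabilityMeasure (Q i)] (hQ : ∀ i, Nonatomic (Q i)) {t : ℝ}
    (ht : t ∈ Icc 0 1) : ∃ F, MeasurableSet F ∧ ∀ i, (Q i).real F = t := by
  set ν := Measure.sum Q
  have hac : ∀ i, Q i ≪ ν := fun i => Measure.absolutelyContinuous_of_le (Measure.le_sum Q i)
  choose q hq using fun i => exists_inner_eq_integral_of_le (Measure.le_sum Q i)
  have hconst : indicatorConstLp 2 MeasurableSet.univ (measure_ne_top ν univ) t ∈
      unitIntervalFiber q fun _ => t := by
    refine ⟨?_, fun i => ?_⟩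
    · filter_upwards [(indicatorConstLp_coeFn :
        ⇑(indicatorConstLp 2 MeasurableSet.univ (measure_ne_top ν univ) t) =ᵐ[ν] _)] with x hx
      rw [hx, indicator_univ]
      exact ht
    · rw [hq, integral_indicatorConstLp_of_absolutelyContinuous (hac i), probReal_univ,
        one_mul]
  obtain ⟨g, hg⟩ := extremePoints_unitIntervalFiber_nonempty q _ ⟨_, hconst⟩
  have h01 := (Nonatomic.sum hQ).ae_eq_zero_or_one_of_mem_extremePoints hg
  set F := {x | g x = 1}
  have hF : MeasurableSet F := (Lp.stronglyMeasurable g).measurable (measurableSet_singleton 1)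
  have hgF : g = indicatorConstLp 2 hF (measure_ne_top ν F) 1 := by
    refine Lp.ext ?_
    filter_upwards [h01, (indicatorConstLp_coeFn :
      ⇑(indicatorConstLp 2 hF (measure_ne_top ν F) (1 : ℝ)) =ᵐ[ν] _)] with x hx hind
    rw [hind]
    rcases hx with hx | hx <;> simp [F, hx]
  refine ⟨F, hF, fun i => ?_⟩
  have := hg.1.2 i
  rwa [hgF, hq, integral_indicatorConstLp_of_absolutelyContinuous (hac i), mul_one] at this

end Measure

theorem stmt13_general {S : Type*} [MeasurableSpace S]
    {N : ℕ} {ε : ℝ}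
    (P₀ : Measure S) (P : Fin N → Measure S)
    [IsProbabilityMeasure P₀] [∀ i, IsProbabilityMeasure (P i)]
    (hP₀na : Nonatomic P₀) (hPna : ∀ i, Nonatomic (P i))
    (hdom : ∀ E F : Set S, MeasurableSet E → MeasurableSet F →
      (∀ i, P i F = P₀ F) →
      (∀ i, P i F ≤ P i E) →
      (P₀ F).toReal - ε / 2 ≤ (P₀ E).toReal) :
    ∀ E : Set S, MeasurableSet E →
      (⨅ i : Fin N, (P i E).toReal) - ε / 2 ≤ (P₀ E).toReal := by
  intro E hE
  set m := ⨅ i : Fin N, (P i E).toReal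
  have hm_le : ∀ i, m ≤ (P i E).toReal := fun i => ciInf_le (Finite.bddBelow_range _) i
  have hm : m ∈ Icc 0 1 := by
    refine ⟨Real.iInf_nonneg fun i => ENNReal.toReal_nonneg, ?_⟩
    rcases isEmpty_or_nonempty (Fin N) with hN | ⟨⟨i⟩⟩
    · simp [m]
    · exact (hm_le i).trans measureReal_le_one
  have : ∀ j, IsProbabilityMeasure ((Fin.cons P₀ P : Fin (N + 1) → Measure S) j) :=
    Fin.cases ‹_› ‹_›
  obtain ⟨F, hF, hFm⟩ := exists_measurableSet_forall_measureReal_eq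
    (Q := (Fin.cons P₀ P : Fin (N + 1) → Measure S)) (Fin.cases hP₀na hPna) hm
  have hP₀F : P₀.real F = m := hFm 0
  have hPF : ∀ i, (P i).real F = m := fun i => hFm i.succ
  calc m - ε / 2 = (P₀ F).toReal - ε / 2 := by rw [← measureReal_def, hP₀F]
    _ ≤ (P₀ E).toReal := hdom E F hE hF
        (fun i => (measureReal_eq_measureReal_iff (measure_ne_top _ _) (measure_ne_top _ _)).1 ((hPF i).trans hP₀F.symm))
        (fun i => (ENNReal.toReal_le_toReal (measure_ne_top _ _) (measure_ne_top _ _)).1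
          ((hPF i).trans_le (hm_le i)))

/-- Let `ε ∈ [0,1]`, let `P₀, P₁, …, P_N` be nonatomic probability
measures, and let `Σ_u` consist of the events whose probability is agreed upon by all.
If for all `E ∈ Σ_S` and `F ∈ Σ_u`, `Pᵢ(E) ≥ Pᵢ(F)` for all `i` implies
`P₀(E) ≥ P₀(F) − ε/2`, then `P₀(E) ≥ min_{1≤i≤N} Pᵢ(E) − ε/2` for every `E ∈ Σ_S`. -/
theorem stmt13 {S : Type*} [MeasurableSpace S]
    {N : ℕ} (hN : 1 ≤ N) {ε : ℝ} (hε0 : 0 ≤ ε) (hε1 : ε ≤ 1)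
    (P₀ : Measure S) (P : Fin N → Measure S)
    [IsProbabilityMeasure P₀] [∀ i, IsProbabilityMeasure (P i)]
    (hP₀na : Nonatomic P₀) (hPna : ∀ i, Nonatomic (P i))
    (hdom : ∀ E F : Set S, MeasurableSet E → MeasurableSet F →
      (∀ i, P i F = P₀ F) →
      (∀ i, P i F ≤ P i E) →
      (P₀ F).toReal - ε / 2 ≤ (P₀ E).toReal) :
    ∀ E : Set S, MeasurableSet E →
      (⨅ i : Fin N, (P i E).toReal) - ε / 2 ≤ (P₀ E).toReal :=
  stmt13_general P₀ P hP₀na hPna hdom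
end
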